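/- arXiv:1811.07821 — 3 statements merged into one kernel-verified Lean document; each statement's English description precedes it below -/
import Mathlib

section
/- In the correlated Erdős–Rényi model, assume n ≥ 2, m·qs ≥ 96·log n, and s ≥ 12q. Then with probability at least 1 − 2·n^{−m} the following holds simultaneously: for every subset S ⊆ [n] with |S| = m and π0 = π*|_S, with n_{ik} = Σ_{j∈S} A_{ij}B_{k,π0(j)} and H_{ik} = 1{n_{ik} ≥ m·qs/2} for i∈S^c, k∈(π*(S))^c, every perfect matching π̃1 between S^c and (π*(S))^c that maximizes Σ_{i∈S^c} H_{i,π̃1(i)} yields a permutation π1 of [n] (extending π0 by π̃1) satisfying |{i ∈ [n] : π1(i) ≠ π*(i)}| ≤ 192·(log n)/(qs). -/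
open MeasureTheory ProbabilityTheory Finset
open scoped ENNReal Classical

noncomputable section

namespace GraphMatching

/-- Joint law of the pair `(A_{ij}, B_{π*(i)π*(j)})` of edge indicators (for `i<j`) in the
correlated Erdős–Rényi model `G(n,q,s)`: `P(1,1) = qs`, `P(1,0) = P(0,1) = q(1−s)`,
`P(0,0) = 1 − 2q + qs`.  (This encodes `A_{ij} ~ Bern(q)` and, conditionally on `A`,
`B ~ Bern(s)` on edges of `A` and `B ~ Bern(q(1−s)/(1−q))` on non-edges.) -/
def erPairLaw (q s : ℝ) : Measure (Bool × Bool) :=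
  ENNReal.ofReal (q * s) • Measure.dirac (true, true)
    + ENNReal.ofReal (q * (1 - s)) • Measure.dirac (true, false)
    + ENNReal.ofReal (q * (1 - s)) • Measure.dirac (false, true)
    + ENNReal.ofReal (1 - 2 * q + q * s) • Measure.dirac (false, false)

/-- The correlated Erdős–Rényi model `G(n,q,s)` with latent permutation `π`:
`A`, `B` are symmetric 0–1 matrices with zero diagonal and the pairs
`(A_{ij}, B_{π(i)π(j)})`, `i < j`, are i.i.d. with law `erPairLaw q s`. -/
structure IsCorrER {Ω : Type*} [MeasurableSpace Ω] (P : Measure Ω)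
    (n : ℕ) (q s : ℝ) (A B : Ω → Fin n → Fin n → Bool) (π : Equiv.Perm (Fin n)) : Prop where
  symmA : ∀ ω i j, A ω i j = A ω j i
  symmB : ∀ ω i j, B ω i j = B ω j i
  diagA : ∀ ω i, A ω i i = false
  diagB : ∀ ω i, B ω i i = false
  meas : ∀ i j : Fin n, Measurable fun ω => (A ω i j, B ω (π i) (π j))
  indep : iIndepFun
    (fun (p : {p : Fin n × Fin n // p.1 < p.2}) ω =>
      (A ω p.1.1 p.1.2, B ω (π p.1.1) (π p.1.2))) P
  law : ∀ i j : Fin n, i < j →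
    P.map (fun ω => (A ω i j, B ω (π i) (π j))) = erPairLaw q s

variable {n : ℕ}

/-- Open neighborhood `N_A(i)`. -/
def nbr (A : Fin n → Fin n → Bool) (i : Fin n) : Finset (Fin n) :=
  univ.filter fun j => A i j = true

/-- Degree `a_i`. -/
def deg (A : Fin n → Fin n → Bool) (i : Fin n) : ℕ := (nbr A i).card

/-- Closed neighborhood `N_A[i]`. -/
def cnbr (A : Fin n → Fin n → Bool) (i : Fin n) : Finset (Fin n) := insert i (nbr A i)

/-- Standardized outdegree `a_j^{(i)} = (Σ_{ℓ∉N_A[i]}(A_{ℓj}−q))/√((n−a_i−1)q(1−q))`. -/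
def outdeg (q : ℝ) (A : Fin n → Fin n → Bool) (i j : Fin n) : ℝ :=
  (∑ ℓ ∈ (cnbr A i)ᶜ, ((if A ℓ j = true then (1 : ℝ) else 0) - q)) /
    Real.sqrt (((n : ℝ) - deg A i - 1) * q * (1 - q))

/-- `Binomc(k,q)(I)`: probability that the standardized binomial `(X−kq)/√(kq(1−q))`,
`X ~ Binom(k,q)`, lies in `I`. -/
def binomcProb (k : ℕ) (q : ℝ) (I : Set ℝ) : ℝ :=
  ∑ x ∈ Finset.range (k + 1),
    (k.choose x : ℝ) * q ^ x * (1 - q) ^ (k - x) *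
      (if ((x : ℝ) - k * q) / Real.sqrt (k * q * (1 - q)) ∈ I then 1 else 0)

/-- Centered degree profile `μ̄_i(I)` (a finite signed measure, evaluated at `I`). -/
def profile (q : ℝ) (A : Fin n → Fin n → Bool) (i : Fin n) (I : Set ℝ) : ℝ :=
  (((nbr A i).filter fun j => outdeg q A i j ∈ I).card : ℝ) / (deg A i : ℝ)
    - binomcProb (n - deg A i - 1) q I

/-- The `ℓ`-th interval of the uniform partition of `[-1/2,1/2]` into `L` pieces. -/
def bin (L ℓ : ℕ) : Set ℝ :=
  Set.Ico (-(1 / 2) + (ℓ : ℝ) / L) (-(1 / 2) + ((ℓ : ℝ) + 1) / L)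

/-- The degree-profile distance statistic `Z_{ik} = Σ_{ℓ∈[L]} |μ̄_i(I_ℓ) − ν̄_k(I_ℓ)|`. -/
def Zstat (q : ℝ) (L : ℕ) (A B : Fin n → Fin n → Bool) (i k : Fin n) : ℝ :=
  ∑ ℓ ∈ Finset.range L, |profile q A i (bin L ℓ) - profile q B k (bin L ℓ)|

/-- Binomial upper tail `P(Binom(m,q) ≥ k)`. -/
def binomTail (m : ℕ) (q : ℝ) (k : ℕ) : ℝ :=
  ∑ x ∈ Finset.Icc k m, (m.choose x : ℝ) * q ^ x * (1 - q) ^ (m - x)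

/-- Seed similarity count `n_{ik} = Σ_{j∈S} A_{ij} B_{k,π0(j)}`, with seeds `π0 = π|_S`. -/
def seedCount (A B : Fin n → Fin n → Bool) (π : Equiv.Perm (Fin n)) (S : Finset (Fin n))
    (i k : Fin n) : ℕ :=
  (S.filter fun j => A i j = true ∧ B k (π j) = true).card

/-- The weight `w(π̃1) = Σ_{i∈Sᶜ} H_{i,π̃1(i)}`, `H_{ik} = 1{n_{ik} ≥ κ}`, of the bipartite
matching induced on `Sᶜ × (π S)ᶜ` by a permutation `π1` of `[n]` extending the seeds. -/
def matchWeight (A B : Fin n → Fin n → Bool) (π : Equiv.Perm (Fin n)) (S : Finset (Fin n))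
    (κ : ℝ) (π1 : Equiv.Perm (Fin n)) : ℕ :=
  (Sᶜ.filter fun i => κ ≤ (seedCount A B π S i (π1 i) : ℝ)).card

/-- Final similarity `w_{ik} = Σ_{j∈[n]} A_{ij} B_{k,π1(j)}`. -/
def wSim (A B : Fin n → Fin n → Bool) (π1 : Equiv.Perm (Fin n)) (i k : Fin n) : ℕ :=
  (univ.filter fun j => A i j = true ∧ B k (π1 j) = true).card


end GraphMatching

/-!
Put `κ = mqs/2` and `e = ⌊96 log n / (qs)⌋`. Outside two bad events every maximizer `π1` makes
at most `2e` errors.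

*Cold errors* (`n_{i,π1(i)} < κ`). Since `π` itself extends the seeds, maximality of `π1` says
that `π1` has no more cold rows than `π`. The first bad event is that some `S` has `e + 1` rows
`i ∉ S` with `n_{i,π(i)} < κ`: the `(e + 1)m` pairs `(A_{ij}, B_{π(i)π(j)})`, `j ∈ S`, are
independent with `P(both edges) = qs`, so a Chernoff bound and a union bound over `(S, R)` give
probability `≤ n^{-m}`.

*Hot errors* (`n_{i,π1(i)} ≥ κ`, `π1(i) ≠ π(i)`). Greedily, a third of them form a matching `M`
no column of which is the `π`-image of one of its rows. Then the `2⌈κ⌉|M|` edges witnessing the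
counts `n_{ik} ≥ κ` lie on distinct vertex pairs, and a union bound over the witnesses gives
probability `≤ (C(m,⌈κ⌉) q^{2⌈κ⌉})^{|M|} ≤ 2^{-⌈κ⌉|M|}` (this is where `s ≥ 12q` enters). Summing
over `(S, M)` gives the second bound `n^{-m}`.
-/

lemma Real.pow_eq_exp_mul_log {x : ℝ} (hx : 0 < x) (k : ℕ) :
    x ^ k = Real.exp (k * Real.log x) := by
  rw [Real.exp_nat_mul, Real.exp_log hx]

lemma Nat.choose_le_exp_mul_div_pow (m k : ℕ) :
    (m.choose k : ℝ) ≤ (Real.exp 1 * m / k) ^ k := by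
  rcases k.eq_zero_or_pos with rfl | hk
  · simp
  have hk' : (0 : ℝ) < k := by exact_mod_cast hk
  calc (m.choose k : ℝ) ≤ (m : ℝ) ^ k / k.factorial := Nat.choose_le_pow_div k m
    _ = (m / k : ℝ) ^ k * ((k : ℝ) ^ k / k.factorial) := by
        rw [mul_div_assoc', div_pow, div_mul_cancel₀ _ (pow_ne_zero _ hk'.ne')]
    _ ≤ (m / k : ℝ) ^ k * Real.exp k :=
        mul_le_mul_of_nonneg_left (Real.pow_div_factorial_le_exp _ hk'.le k) (by positivity)
    _ = (Real.exp 1 * m / k) ^ k := by rw [← Real.exp_one_pow, ← mul_pow]; ring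

lemma Nat.choose_mul_pow_le_half_pow {m k : ℕ} {q : ℝ} (hk : 6 * m * q ^ 2 ≤ k) :
    m.choose k * q ^ (2 * k) ≤ (1 / 2) ^ k := by
  rcases k.eq_zero_or_pos with rfl | hk0
  · simp
  have hk0' : (0 : ℝ) < k := by exact_mod_cast hk0
  have hbase : Real.exp 1 * m / k * q ^ 2 ≤ 1 / 2 := by
    rw [div_mul_eq_mul_div, div_le_iff₀ hk0']
    have hmq : (0 : ℝ) ≤ m * q ^ 2 := by positivity
    nlinarith [mul_le_mul_of_nonneg_right Real.exp_one_lt_d9.le hmq]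
  calc m.choose k * q ^ (2 * k) ≤ (Real.exp 1 * m / k) ^ k * (q ^ 2) ^ k := by
        rw [← pow_mul]
        exact mul_le_mul_of_nonneg_right (Nat.choose_le_exp_mul_div_pow m k)
          (by rw [pow_mul]; positivity)
    _ = (Real.exp 1 * m / k * q ^ 2) ^ k := (mul_pow _ _ _).symm
    _ ≤ (1 / 2) ^ k := pow_le_pow_left₀ (by positivity) hbase k

namespace Finset

theorem exists_subset_pairwise_not_of_degree_le {α : Type*} [DecidableEq α] (r : α → α → Prop)
    [DecidableRel r] (d : ℕ) (M : Finset α) (hout : ∀ x ∈ M, (M.filter (r x)).card ≤ d)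
    (hin : ∀ x ∈ M, (M.filter (r · x)).card ≤ d) :
    ∃ I ⊆ M, M.card ≤ (2 * d + 1) * I.card ∧ (I : Set α).Pairwise fun x y => ¬ r x y := by
  induction M using Finset.strongInduction with
  | H M ih =>
    rcases M.eq_empty_or_nonempty with rfl | ⟨x, hx⟩
    · exact ⟨∅, empty_subset _, by simp, by simp⟩
    set N := insert x (M.filter (r x) ∪ M.filter (r · x))
    have hNM : N ⊆ M := insert_subset hx (union_subset (filter_subset _ _) (filter_subset _ _))
    have hN : N.card ≤ 2 * d + 1 := by
      have : N.card ≤ (M.filter (r x) ∪ M.filter (r · x)).card + 1 := card_insert_le _ _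
      have := card_union_le (M.filter (r x)) (M.filter (r · x))
      have := hout x hx
      have := hin x hx
      omega
    have hsub (p : α → Prop) [DecidablePred p] : ((M \ N).filter p).card ≤ (M.filter p).card :=
      card_le_card (filter_subset_filter _ sdiff_subset)
    obtain ⟨I, hIM, hcard, hI⟩ := ih (M \ N) (sdiff_ssubset hNM ⟨x, mem_insert_self x _⟩)
      (fun y hy => (hsub _).trans (hout y (sdiff_subset hy)))
      (fun y hy => (hsub _).trans (hin y (sdiff_subset hy)))
    have hxI : x ∉ I := fun h => (mem_sdiff.mp (hIM h)).2 (mem_insert_self x _)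
    refine ⟨insert x I, insert_subset hx (hIM.trans sdiff_subset), ?_, ?_⟩
    · have hM : M.card ≤ (2 * d + 1) * I.card + N.card :=
        Nat.sub_le_iff_le_add.mp ((card_sdiff_of_subset hNM).symm.trans_le hcard)
      rw [card_insert_of_notMem hxI, mul_add, mul_one]
      omega
    · rw [coe_insert, Set.pairwise_insert]
      refine ⟨hI, fun y hy _ => ?_⟩
      obtain ⟨hyM, hyN⟩ := mem_sdiff.mp (hIM hy)
      simp only [N, mem_insert, mem_union, mem_filter, not_or] at hyN
      exact ⟨fun h => hyN.2.1 ⟨hyM, h⟩, fun h => hyN.2.2 ⟨hyM, h⟩⟩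

end Finset

namespace ENNReal

lemma natCast_mul_ofReal_le_ofReal {k : ℕ} {x b : ℝ} (hk : (k : ℝ) ≤ x) (hb : 0 ≤ b) :
    (k : ℝ≥0∞) * ENNReal.ofReal b ≤ ENNReal.ofReal (x * b) := by
  rw [← ENNReal.ofReal_natCast, ← ENNReal.ofReal_mul (Nat.cast_nonneg _)]
  exact ENNReal.ofReal_le_ofReal (mul_le_mul_of_nonneg_right hk hb)

end ENNReal

namespace MeasureTheory

variable {Ω : Type*} [MeasurableSpace Ω] {P : Measure Ω}

lemma measure_biUnion_finset_le_card_mul {ι : Type*} (T : Finset ι) (E : ι → Set Ω)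
    {b : ℝ≥0∞} (h : ∀ i ∈ T, P (E i) ≤ b) : P (⋃ i ∈ T, E i) ≤ T.card * b :=
  (measure_biUnion_finset_le T E).trans ((sum_le_card_nsmul T _ b h).trans_eq (nsmul_eq_mul _ _))

lemma ofReal_one_sub_le_measure_of_compl_le [IsProbabilityMeasure P] {G : Set Ω} {a : ℝ}
    (ha : 0 ≤ a) (h : P Gᶜ ≤ ENNReal.ofReal a) : ENNReal.ofReal (1 - a) ≤ P G := by
  have hcover : (1 : ℝ≥0∞) ≤ P G + P Gᶜ := by
    simpa using measure_union_le (μ := P) G Gᶜ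
  rw [ENNReal.ofReal_sub _ ha, ENNReal.ofReal_one]
  exact tsub_le_iff_right.mpr (hcover.trans (add_le_add le_rfl h))

end MeasureTheory

namespace ProbabilityTheory

variable {Ω : Type*} [MeasurableSpace Ω] {P : Measure Ω} [IsProbabilityMeasure P]

lemma mgf_indicator_one {E : Set Ω} (hE : MeasurableSet E) (t : ℝ) :
    mgf (E.indicator 1) P t = 1 + (Real.exp t - 1) * P.real E := by
  have h : (fun ω => Real.exp (t * E.indicator 1 ω)) =
      fun ω => 1 + E.indicator (fun _ => Real.exp t - 1) ω := by
    funext ω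
    by_cases hω : ω ∈ E <;> simp [hω]
  rw [mgf, h, integral_add (integrable_const _) ((integrable_const _).indicator hE),
    integral_indicator_const _ hE]
  simp [mul_comm]

theorem measure_card_filter_le_le_exp {ι β : Type*} [Fintype ι] [MeasurableSpace β]
    {Y : ι → Ω → β} (hY : iIndepFun Y P) (hmeas : ∀ i, Measurable (Y i)) {D : Set β}
    (hD : MeasurableSet D) {p : ℝ} (hp : ∀ i, P.real (Y i ⁻¹' D) = p) {t : ℝ} (ht : 0 ≤ t)
    (ε : ℝ) :
    P {ω | ((univ.filter fun i => Y i ω ∈ D).card : ℝ) ≤ ε} ≤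
      ENNReal.ofReal (Real.exp (t * ε + (Real.exp (-t) - 1) * p * Fintype.card ι)) := by
  set X : ι → Ω → ℝ := fun i => (Y i ⁻¹' D).indicator 1
  have hXmeas : ∀ i, Measurable (X i) := fun i => measurable_one.indicator (hmeas i hD)
  have hX : iIndepFun X P := hY.comp (fun _ => D.indicator 1) fun _ => measurable_one.indicator hD
  have hcount : ∀ ω, ((univ.filter fun i => Y i ω ∈ D).card : ℝ) = ∑ i, X i ω := by
    intro ω
    simp [X, Set.indicator_apply]
  have hint : Integrable (fun ω => Real.exp (-t * ∑ i, X i ω)) P := by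
    refine Integrable.of_bound (by fun_prop) 1 (ae_of_all _ fun ω => ?_)
    rw [Real.norm_eq_abs, Real.abs_exp, Real.exp_le_one_iff]
    exact mul_nonpos_of_nonpos_of_nonneg (neg_nonpos.mpr ht)
      (sum_nonneg fun i _ => Set.indicator_nonneg (fun _ _ => zero_le_one) _)
  have hone : ∀ i, mgf (X i) P (-t) ≤ Real.exp ((Real.exp (-t) - 1) * p) := fun i => by
    rw [mgf_indicator_one (hmeas i hD), hp, add_comm]
    exact Real.add_one_le_exp _
  have hmgf : mgf (fun ω => ∑ i, X i ω) P (-t) ≤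
      Real.exp ((Real.exp (-t) - 1) * p * Fintype.card ι) :=
    calc mgf (fun ω => ∑ i, X i ω) P (-t) = ∏ i, mgf (X i) P (-t) := by
          rw [← hX.mgf_sum hXmeas]; congr; funext ω; simp
      _ ≤ ∏ _i : ι, Real.exp ((Real.exp (-t) - 1) * p) :=
          prod_le_prod (fun _ _ => mgf_nonneg) fun i _ => hone i
      _ = Real.exp ((Real.exp (-t) - 1) * p * Fintype.card ι) := by
          rw [prod_const, card_univ, ← Real.exp_nat_mul]; ring_nf
  have hchernoff := measure_le_le_exp_mul_mgf ε (neg_nonpos.mpr ht) hint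
  rw [neg_neg] at hchernoff
  simp only [hcount]
  rw [← ofReal_measureReal, Real.exp_add]
  exact ENNReal.ofReal_le_ofReal
    (hchernoff.trans (mul_le_mul_of_nonneg_left hmgf (Real.exp_pos _).le))

end ProbabilityTheory

namespace GraphMatching

variable {n : ℕ} {q s : ℝ}

lemma erPairLaw_apply (C : Set (Bool × Bool)) :
    erPairLaw q s C = (if (true, true) ∈ C then ENNReal.ofReal (q * s) else 0)
      + (if (true, false) ∈ C then ENNReal.ofReal (q * (1 - s)) else 0)
      + (if (false, true) ∈ C then ENNReal.ofReal (q * (1 - s)) else 0)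
      + (if (false, false) ∈ C then ENNReal.ofReal (1 - 2 * q + q * s) else 0) := by
  simp [erPairLaw, Measure.dirac_apply' _ C.toFinite.measurableSet, Set.indicator_apply]

lemma erPairLaw_fst (hq : 0 ≤ q) (hs : 0 ≤ s) (hs1 : s ≤ 1) :
    erPairLaw q s {z | z.1 = true} = ENNReal.ofReal q := by
  simp only [erPairLaw_apply, Set.mem_ofPred_eq, if_true, Bool.false_eq_true, if_false, add_zero]
  rw [← ENNReal.ofReal_add (by positivity) (mul_nonneg hq (by linarith))]
  ring_nf

lemma erPairLaw_snd (hq : 0 ≤ q) (hs : 0 ≤ s) (hs1 : s ≤ 1) :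
    erPairLaw q s {z | z.2 = true} = ENNReal.ofReal q := by
  simp only [erPairLaw_apply, Set.mem_ofPred_eq, if_true, Bool.false_eq_true, if_false, add_zero]
  rw [← ENNReal.ofReal_add (by positivity) (mul_nonneg hq (by linarith))]
  ring_nf

lemma pos_and_le_one_of_erPairLaw_univ (h : erPairLaw q s Set.univ = 1) (hqs : 0 < q * s) :
    0 < q ∧ s ≤ 1 := by
  simp only [erPairLaw_apply, Set.mem_univ, if_true] at h
  have h4 : ENNReal.ofReal (1 - 2 * q + q * s) ≤ 1 := h ▸ le_add_self
  have h14 : ENNReal.ofReal (q * s + (1 - 2 * q + q * s)) ≤ 1 :=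
    ENNReal.ofReal_add_le.trans (h ▸ add_le_add (le_add_right (le_add_right le_rfl)) le_rfl)
  rw [ENNReal.ofReal_le_one] at h4 h14
  have hq : 0 < q := by linarith
  exact ⟨hq, by nlinarith⟩

lemma fst_ne_snd_of_mem_compl_product {S : Finset (Fin n)} {x : Fin n × Fin n}
    (hx : x ∈ Sᶜ ×ˢ S) : x.1 ≠ x.2 := fun h =>
  mem_compl.1 (mem_product.1 hx).1 (h ▸ (mem_product.1 hx).2)

lemma min_max_injOn_compl_product (S : Finset (Fin n)) :
    Set.InjOn (fun x : Fin n × Fin n => (min x.1 x.2, max x.1 x.2)) (Sᶜ ×ˢ S : Finset _) := by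
  intro x hx y hy h
  simp only [coe_product, coe_compl, Set.mem_prod, Set.mem_compl_iff, mem_coe] at hx hy
  simp only [Prod.mk.injEq] at h
  grind

lemma card_biUnion_image_mk {ι α β : Type*} [DecidableEq α] [DecidableEq β] {T : Finset ι}
    {f : ι → α} (hf : Set.InjOn f T) (g : ι → Finset β) :
    (T.biUnion fun t => (g t).image (Prod.mk (f t))).card = ∑ t ∈ T, (g t).card := by
  rw [card_biUnion]
  · exact sum_congr rfl fun t _ => card_image_of_injective _ (Prod.mk_right_injective _)
  · intro t ht t' ht' hne
    simp only [Function.onFun, disjoint_left, mem_image]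
    rintro _ ⟨j, -, rfl⟩ ⟨j', -, h⟩
    exact hne (hf ht ht' (congrArg Prod.fst h).symm)

/-- `snd_ne` keeps the pairs `(i, j)` carrying `A_{ij}` apart from the pairs `(π⁻¹ k, j)` carrying
`B_{k π(j)}` (`(i, k) ∈ M`, `j ∈ S`), so all edges behind the counts `n_{ik}` sit on distinct
vertex pairs and are independent. -/
structure IsWrongMatching (π : Equiv.Perm (Fin n)) (S : Finset (Fin n))
    (M : Finset (Fin n × Fin n)) : Prop where
  fst_notMem : ∀ t ∈ M, t.1 ∉ S
  symm_snd_notMem : ∀ t ∈ M, π.symm t.2 ∉ S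
  injOn_fst : Set.InjOn Prod.fst (M : Set (Fin n × Fin n))
  injOn_snd : Set.InjOn Prod.snd (M : Set (Fin n × Fin n))
  snd_ne : ∀ t ∈ M, ∀ t' ∈ M, t.2 ≠ π t'.1

def SeedDeficient (A B : Fin n → Fin n → Bool) (π : Equiv.Perm (Fin n)) (m r : ℕ) (κ : ℝ) :
    Prop :=
  ∃ S R : Finset (Fin n), S.card = m ∧ R.card = r ∧ Disjoint R S ∧
    ∀ i ∈ R, (seedCount A B π S i (π i) : ℝ) < κ

def HasWrongMatching (A B : Fin n → Fin n → Bool) (π : Equiv.Perm (Fin n)) (m v : ℕ) (κ : ℝ) :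
    Prop :=
  ∃ (S : Finset (Fin n)) (M : Finset (Fin n × Fin n)), S.card = m ∧ M.card = v ∧
    IsWrongMatching π S M ∧ ∀ t ∈ M, κ ≤ (seedCount A B π S t.1 t.2 : ℝ)

section Deterministic

variable {m : ℕ} {A B : Fin n → Fin n → Bool} {π π1 : Equiv.Perm (Fin n)} {S : Finset (Fin n)}
  {κ : ℝ} {e : ℕ}

lemma sum_seedCount_eq_card_filter (S R : Finset (Fin n)) :
    ∑ i ∈ R, seedCount A B π S i (π i) =
      ((R ×ˢ S).filter fun x => A x.1 x.2 = true ∧ B (π x.1) (π x.2) = true).card := by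
  rw [card_filter, sum_product]
  refine sum_congr rfl fun i _ => ?_
  rw [seedCount, card_filter]

lemma card_filter_seedCount_lt_le_of_not_seedDeficient (hS : S.card = m)
    (h : ¬ SeedDeficient A B π m (e + 1) κ) :
    (Sᶜ.filter fun i => (seedCount A B π S i (π i) : ℝ) < κ).card ≤ e := by
  by_contra! hlt
  obtain ⟨R, hR, hRcard⟩ := exists_subset_card_eq hlt
  exact h ⟨S, R, hS, hRcard, disjoint_left.2 fun i hi => mem_compl.1 (mem_filter.1 (hR hi)).1,
    fun i hi => (mem_filter.1 (hR hi)).2⟩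

lemma card_filter_seedCount_lt_le_of_matchWeight_le
    (hmax : matchWeight A B π S κ π ≤ matchWeight A B π S κ π1) :
    (Sᶜ.filter fun i => (seedCount A B π S i (π1 i) : ℝ) < κ).card ≤
      (Sᶜ.filter fun i => (seedCount A B π S i (π i) : ℝ) < κ).card := by
  have h := card_filter_add_card_filter_not (s := Sᶜ)
    fun i => κ ≤ (seedCount A B π S i (π i) : ℝ)
  have h1 := card_filter_add_card_filter_not (s := Sᶜ)
    fun i => κ ≤ (seedCount A B π S i (π1 i) : ℝ)
  simp only [not_le] at h h1
  unfold matchWeight at hmax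
  omega

lemma isWrongMatching_image (hext : ∀ i ∈ S, π1 i = π i) {J : Finset (Fin n)}
    (hJ : ∀ i ∈ J, ∀ i' ∈ J, π1 i ≠ π i') : IsWrongMatching π S (J.image fun i => (i, π1 i)) where
  fst_notMem := forall_mem_image.2 fun i hi hiS => hJ i hi i hi (hext i hiS)
  symm_snd_notMem := forall_mem_image.2 fun i hi hiS => by
    have : π.symm (π1 i) = i := π1.injective (by rw [hext _ hiS, Equiv.apply_symm_apply])
    exact hJ i hi i hi (hext i (this ▸ hiS))
  injOn_fst := by
    rintro _ hx _ hy h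
    obtain ⟨i, -, rfl⟩ := mem_image.1 hx
    obtain ⟨i', -, rfl⟩ := mem_image.1 hy
    simp_all
  injOn_snd := by
    rintro _ hx _ hy h
    obtain ⟨i, -, rfl⟩ := mem_image.1 hx
    obtain ⟨i', -, rfl⟩ := mem_image.1 hy
    simp_all
  snd_ne := forall_mem_image.2 fun i hi => forall_mem_image.2 fun i' hi' => hJ i hi i' hi'

lemma card_hot_errors_le (hS : S.card = m) (h : ¬ HasWrongMatching A B π m ((e + 3) / 3) κ)
    (hext : ∀ i ∈ S, π1 i = π i) :
    (univ.filter fun i => π1 i ≠ π i ∧ κ ≤ (seedCount A B π S i (π1 i) : ℝ)).card ≤ e := by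
  by_contra! hlt
  set H := univ.filter fun i => π1 i ≠ π i ∧ κ ≤ (seedCount A B π S i (π1 i) : ℝ)
  obtain ⟨I, hIH, hcard, hI⟩ :=
    exists_subset_pairwise_not_of_degree_le (fun i i' => π1 i = π i') 1 H
      (fun _ _ => card_le_one.2 fun a ha b hb =>
        π.injective ((mem_filter.1 ha).2.symm.trans (mem_filter.1 hb).2))
      (fun _ _ => card_le_one.2 fun a ha b hb =>
        π1.injective ((mem_filter.1 ha).2.trans (mem_filter.1 hb).2.symm))
  obtain ⟨J, hJI, hJ⟩ := exists_subset_card_eq (show (e + 3) / 3 ≤ I.card by omega)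
  have hJH : ∀ i ∈ J, π1 i ≠ π i ∧ κ ≤ (seedCount A B π S i (π1 i) : ℝ) :=
    fun i hi => (mem_filter.1 (hIH (hJI hi))).2
  have hJπ : ∀ i ∈ J, ∀ i' ∈ J, π1 i ≠ π i' := fun i hi i' hi' => by
    rcases eq_or_ne i i' with rfl | hii'
    exacts [(hJH i hi).1, hI (hJI hi) (hJI hi') hii']
  exact h ⟨S, J.image fun i => (i, π1 i), hS,
    (card_image_of_injective _ fun a b h => (Prod.mk.inj h).1).trans hJ,
    isWrongMatching_image hext hJπ, forall_mem_image.2 fun i hi => (hJH i hi).2⟩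

lemma card_errors_le (hS : S.card = m) (h1 : ¬ SeedDeficient A B π m (e + 1) κ)
    (h2 : ¬ HasWrongMatching A B π m ((e + 3) / 3) κ) (hext : ∀ i ∈ S, π1 i = π i)
    (hmax : matchWeight A B π S κ π ≤ matchWeight A B π S κ π1) :
    (univ.filter fun i => π1 i ≠ π i).card ≤ 2 * e := by
  have hsplit := card_filter_add_card_filter_not (s := univ.filter fun i => π1 i ≠ π i)
    fun i => κ ≤ (seedCount A B π S i (π1 i) : ℝ)
  rw [filter_filter, filter_filter] at hsplit
  have hcold : (univ.filter fun i => π1 i ≠ π i ∧ ¬ κ ≤ (seedCount A B π S i (π1 i) : ℝ)).card ≤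
      (Sᶜ.filter fun i => (seedCount A B π S i (π1 i) : ℝ) < κ).card :=
    card_le_card fun i hi => by
      simp only [mem_filter, mem_univ, true_and, not_le, mem_compl] at hi ⊢
      exact ⟨fun hiS => hi.1 (hext i hiS), hi.2⟩
  have := card_hot_errors_le hS h2 hext
  have := card_filter_seedCount_lt_le_of_matchWeight_le hmax
  have := card_filter_seedCount_lt_le_of_not_seedDeficient hS h1
  omega

end Deterministic

section Model

variable {Ω : Type*} [MeasurableSpace Ω] {P : Measure Ω} {A B : Ω → Fin n → Fin n → Bool}
  {π : Equiv.Perm (Fin n)}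

def edgeVar (A B : Ω → Fin n → Fin n → Bool) (π : Equiv.Perm (Fin n)) (x : Fin n × Fin n)
    (ω : Ω) : Bool × Bool :=
  (A ω x.1 x.2, B ω (π x.1) (π x.2))

namespace IsCorrER

lemma edgeVar_min_max (hM : IsCorrER P n q s A B π) (x : Fin n × Fin n) :
    edgeVar A B π (min x.1 x.2, max x.1 x.2) = edgeVar A B π x := by
  funext ω
  rcases le_total x.1 x.2 with h | h
  · simp [min_eq_left h, max_eq_right h]
  · simp [min_eq_right h, max_eq_left h, edgeVar, hM.symmA ω x.1, hM.symmB ω (π x.1)]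

lemma iIndepFun_edgeVar (hM : IsCorrER P n q s A B π) {S : Finset (Fin n)}
    {V : Finset (Fin n × Fin n)} (hV : V ⊆ Sᶜ ×ˢ S) :
    iIndepFun (fun x : V => edgeVar A B π x) P := by
  have hne : ∀ x : V, x.1.1 ≠ x.1.2 := fun x => fst_ne_snd_of_mem_compl_product (hV x.2)
  let g : V → {p : Fin n × Fin n // p.1 < p.2} :=
    fun x => ⟨(min x.1.1 x.1.2, max x.1.1 x.1.2), min_lt_max.2 (hne x)⟩
  have hg : g.Injective := fun x y h =>
    Subtype.ext (min_max_injOn_compl_product S (hV x.2) (hV y.2) (congrArg Subtype.val h))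
  convert hM.indep.precomp hg using 1
  funext x
  exact (hM.edgeVar_min_max x).symm

lemma map_edgeVar (hM : IsCorrER P n q s A B π) {x : Fin n × Fin n} (hx : x.1 ≠ x.2) :
    P.map (edgeVar A B π x) = erPairLaw q s := by
  rcases lt_or_gt_of_ne hx with h | h
  · exact hM.law _ _ h
  · rw [← hM.edgeVar_min_max x, min_eq_right h.le, max_eq_left h.le]
    exact hM.law _ _ h

lemma measure_edgeVar_preimage (hM : IsCorrER P n q s A B π) {x : Fin n × Fin n}
    (hx : x.1 ≠ x.2) (C : Set (Bool × Bool)) :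
    P (edgeVar A B π x ⁻¹' C) = erPairLaw q s C := by
  rw [← hM.map_edgeVar hx]
  exact (Measure.map_apply (hM.meas x.1 x.2) C.toFinite.measurableSet).symm

lemma pos_and_le_one (hM : IsCorrER P n q s A B π) [IsProbabilityMeasure P] (hn : 2 ≤ n)
    (hqs : 0 < q * s) : 0 < q ∧ s ≤ 1 := by
  refine pos_and_le_one_of_erPairLaw_univ ?_ hqs
  rw [← hM.measure_edgeVar_preimage (x := (⟨0, by omega⟩, ⟨1, by omega⟩)) (by simp)]
  simp

lemma measure_forall_fst_and_forall_snd_le (hM : IsCorrER P n q s A B π) (hq : 0 ≤ q)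
    (hs : 0 ≤ s) (hs1 : s ≤ 1) {S : Finset (Fin n)} {VA VB : Finset (Fin n × Fin n)}
    (hV : VA ∪ VB ⊆ Sᶜ ×ˢ S) :
    P {ω | (∀ x ∈ VA, A ω x.1 x.2 = true) ∧ ∀ x ∈ VB, B ω (π x.1) (π x.2) = true} ≤
      ENNReal.ofReal q ^ (VA ∪ VB).card := by
  let C : Fin n × Fin n → Set (Bool × Bool) :=
    fun x => if x ∈ VA then {z | z.1 = true} else {z | z.2 = true}
  have hC : ∀ x : ↥(VA ∪ VB), P (edgeVar A B π x ⁻¹' C x) = ENNReal.ofReal q := fun x => by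
    rw [hM.measure_edgeVar_preimage (fst_ne_snd_of_mem_compl_product (hV x.2))]
    unfold C
    split_ifs
    exacts [erPairLaw_fst hq hs hs1, erPairLaw_snd hq hs hs1]
  have hsub : {ω | (∀ x ∈ VA, A ω x.1 x.2 = true) ∧ ∀ x ∈ VB, B ω (π x.1) (π x.2) = true} ⊆
      ⋂ x ∈ (univ : Finset ↥(VA ∪ VB)), edgeVar A B π x ⁻¹' C x := by
    intro ω hω
    simp only [Set.mem_iInter]
    intro x _
    by_cases hx : x.1 ∈ VA
    · simpa [C, hx, edgeVar] using hω.1 _ hx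
    · simpa [C, hx, edgeVar] using hω.2 _ ((mem_union.1 x.2).resolve_left hx)
  calc _ ≤ _ := measure_mono hsub
    _ = ∏ x : ↥(VA ∪ VB), P (edgeVar A B π x ⁻¹' C x) :=
        (hM.iIndepFun_edgeVar hV).measure_inter_preimage_eq_mul _
          fun x _ => (C x).toFinite.measurableSet
    _ = ENNReal.ofReal q ^ (VA ∪ VB).card := by simp [hC]

lemma measure_sum_seedCount_le (hM : IsCorrER P n q s A B π) [IsProbabilityMeasure P]
    (hqs : 0 ≤ q * s) {S R : Finset (Fin n)} (hRS : Disjoint R S) (ε : ℝ) :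
    P {ω | (∑ i ∈ R, seedCount (A ω) (B ω) π S i (π i) : ℝ) ≤ ε} ≤
      ENNReal.ofReal (Real.exp (Real.log 2 * ε - q * s * (R.card * S.card) / 2)) := by
  have hV : R ×ˢ S ⊆ Sᶜ ×ˢ S :=
    product_subset_product_left fun i hi => mem_compl.2 (disjoint_left.1 hRS hi)
  have hp : ∀ x : ↥(R ×ˢ S), P.real (edgeVar A B π x ⁻¹' {(true, true)}) = q * s := fun x => by
    rw [measureReal_def, hM.measure_edgeVar_preimage (fst_ne_snd_of_mem_compl_product (hV x.2)),
      erPairLaw_apply]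
    simp [hqs]
  have hcount : ∀ ω, (∑ i ∈ R, seedCount (A ω) (B ω) π S i (π i) : ℝ) =
      ((univ.filter fun x : ↥(R ×ˢ S) => edgeVar A B π x ω = (true, true)).card : ℝ) := by
    intro ω
    rw [← Nat.cast_sum, sum_seedCount_eq_card_filter, card_filter, card_filter,
      ← sum_coe_sort (R ×ˢ S)]
    simp only [edgeVar, Prod.mk.injEq]
  have := measure_card_filter_le_le_exp (hM.iIndepFun_edgeVar hV) (fun x => hM.meas _ _)
    (measurableSet_singleton _) hp (Real.log_nonneg one_le_two) ε
  simp only [Set.mem_singleton_iff] at this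
  simp only [hcount]
  convert this using 4
  rw [Real.exp_neg, Real.exp_log two_pos, Fintype.card_coe, card_product]
  push_cast
  ring

lemma measure_witnesses_le (hM : IsCorrER P n q s A B π) (hq : 0 ≤ q) (hs : 0 ≤ s)
    (hs1 : s ≤ 1) {S : Finset (Fin n)} {M : Finset (Fin n × Fin n)}
    (hW : IsWrongMatching π S M) {k : ℕ} {g : M → Finset (Fin n)}
    (hg : ∀ t, g t ⊆ S ∧ (g t).card = k) :
    P {ω | ∀ t : M, ∀ j ∈ g t, A ω t.1.1 j = true ∧ B ω t.1.2 (π j) = true} ≤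
      ENNReal.ofReal q ^ (2 * k * M.card) := by
  let VA := univ.biUnion fun t : M => (g t).image (Prod.mk t.1.1)
  let VB := univ.biUnion fun t : M => (g t).image (Prod.mk (π.symm t.1.2))
  have hcard {f : M → Fin n} (hf : f.Injective) :
      (univ.biUnion fun t : M => (g t).image (Prod.mk (f t))).card = k * M.card := by
    rw [card_biUnion_image_mk hf.injOn, sum_congr rfl fun t _ => (hg t).2, sum_const, card_univ,
      Fintype.card_coe, smul_eq_mul, mul_comm]
  have hVA : VA.card = k * M.card :=
    hcard fun t t' h => Subtype.ext (hW.injOn_fst t.2 t'.2 h)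
  have hVB : VB.card = k * M.card :=
    hcard fun t t' h => Subtype.ext (hW.injOn_snd t.2 t'.2 (π.symm.injective h))
  have hdisj : Disjoint VA VB := by
    simp only [VA, VB, disjoint_left, mem_biUnion, mem_image, mem_univ, true_and]
    rintro _ ⟨t, j, -, rfl⟩ ⟨t', j', -, h⟩
    exact hW.snd_ne t'.1 t'.2 t.1 t.2 (by rw [← congrArg Prod.fst h, Equiv.apply_symm_apply])
  have hcut : VA ∪ VB ⊆ Sᶜ ×ˢ S := by
    simp only [VA, VB, union_subset_iff, biUnion_subset, mem_univ, forall_const, image_subset_iff,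
      mem_product, mem_compl]
    exact ⟨fun t j hj => ⟨hW.fst_notMem _ t.2, (hg t).1 hj⟩,
      fun t j hj => ⟨hW.symm_snd_notMem _ t.2, (hg t).1 hj⟩⟩
  have hsub : {ω | ∀ t : M, ∀ j ∈ g t, A ω t.1.1 j = true ∧ B ω t.1.2 (π j) = true} ⊆
      {ω | (∀ x ∈ VA, A ω x.1 x.2 = true) ∧ ∀ x ∈ VB, B ω (π x.1) (π x.2) = true} := by
    intro ω hω
    simp only [VA, VB, mem_biUnion, mem_image, mem_univ, true_and, Set.mem_ofPred_eq]
    refine ⟨?_, ?_⟩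
    · rintro _ ⟨t, j, hj, rfl⟩
      exact (hω t j hj).1
    · rintro _ ⟨t, j, hj, rfl⟩
      simpa using (hω t j hj).2
  calc _ ≤ _ := measure_mono hsub
    _ ≤ _ := hM.measure_forall_fst_and_forall_snd_le hq hs hs1 hcut
    _ = _ := by rw [card_union_of_disjoint hdisj, hVA, hVB]; ring_nf

lemma measure_forall_le_seedCount_le (hM : IsCorrER P n q s A B π) (hq : 0 ≤ q)
    (hs : 0 ≤ s) (hs1 : s ≤ 1) {S : Finset (Fin n)} {M : Finset (Fin n × Fin n)}
    (hW : IsWrongMatching π S M) (k : ℕ) :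
    P {ω | ∀ t ∈ M, k ≤ seedCount (A ω) (B ω) π S t.1 t.2} ≤
      ENNReal.ofReal ((S.card.choose k * q ^ (2 * k)) ^ M.card) := by
  let W := Fintype.piFinset fun _ : M => S.powersetCard k
  have hsub : {ω | ∀ t ∈ M, k ≤ seedCount (A ω) (B ω) π S t.1 t.2} ⊆
      ⋃ g ∈ W, {ω | ∀ t : M, ∀ j ∈ g t, A ω t.1.1 j = true ∧ B ω t.1.2 (π j) = true} := by
    intro ω hω
    choose g hgS hgk using fun t : M => exists_subset_card_eq (hω t.1 t.2)
    simp only [Set.mem_iUnion]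
    refine ⟨g, Fintype.mem_piFinset.2 fun t => mem_powersetCard.2 ⟨?_, hgk t⟩,
      fun t j hj => (mem_filter.1 (hgS t hj)).2⟩
    exact (hgS t).trans (filter_subset _ _)
  calc _ ≤ _ := measure_mono hsub
    _ ≤ W.card * ENNReal.ofReal q ^ (2 * k * M.card) :=
        measure_biUnion_finset_le_card_mul _ _ fun g hg =>
          hM.measure_witnesses_le hq hs hs1 hW fun t =>
            mem_powersetCard.1 (Fintype.mem_piFinset.1 hg t)
    _ = _ := by
        rw [Fintype.card_piFinset, prod_const, card_powersetCard, card_univ, Fintype.card_coe,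
          mul_pow, ENNReal.ofReal_mul (by positivity), ENNReal.ofReal_pow (by positivity),
          ENNReal.ofReal_pow (by positivity), ENNReal.ofReal_pow hq, ← pow_mul,
          ENNReal.ofReal_natCast]
        push_cast
        ring_nf

lemma measure_seedDeficient_le (hM : IsCorrER P n q s A B π) [IsProbabilityMeasure P]
    (hqs : 0 ≤ q * s) (m r : ℕ) (κ : ℝ) :
    P {ω | SeedDeficient (A ω) (B ω) π m r κ} ≤ ENNReal.ofReal
      (n ^ m * n ^ r * Real.exp (Real.log 2 * (r * κ) - q * s * (r * m) / 2)) := by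
  let T := powersetCard m (univ : Finset (Fin n)) ×ˢ powersetCard r (univ : Finset (Fin n))
  let E : Finset (Fin n) × Finset (Fin n) → Set Ω := fun SR =>
    {ω | Disjoint SR.2 SR.1 ∧ ∀ i ∈ SR.2, (seedCount (A ω) (B ω) π SR.1 i (π i) : ℝ) < κ}
  have hsub : {ω | SeedDeficient (A ω) (B ω) π m r κ} ⊆ ⋃ SR ∈ T, E SR := by
    rintro ω ⟨S, R, hS, hR, hRS, hlt⟩
    exact Set.mem_biUnion (x := (S, R))
      (mem_product.2 ⟨mem_powersetCard_univ.2 hS, mem_powersetCard_univ.2 hR⟩) ⟨hRS, hlt⟩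
  have hE : ∀ SR ∈ T, P (E SR) ≤
      ENNReal.ofReal (Real.exp (Real.log 2 * (r * κ) - q * s * (r * m) / 2)) := by
    rintro ⟨S, R⟩ hSR
    obtain ⟨hS, hR⟩ := mem_product.1 hSR
    rw [mem_powersetCard_univ] at hS hR
    by_cases hRS : Disjoint R S
    · calc P (E (S, R))
          ≤ P {ω | (∑ i ∈ R, seedCount (A ω) (B ω) π S i (π i) : ℝ) ≤ r * κ} :=
            measure_mono fun ω hω => by
              simpa [hR] using sum_le_card_nsmul R _ κ fun i hi => (hω.2 i hi).le
        _ ≤ _ := by simpa [hS, hR] using hM.measure_sum_seedCount_le hqs hRS (r * κ)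
    · simp [E, hRS]
  have hT : (T.card : ℝ) ≤ n ^ m * n ^ r := by
    simp only [T, card_product, card_powersetCard, card_univ, Fintype.card_fin]
    exact_mod_cast Nat.mul_le_mul (Nat.choose_le_pow n m) (Nat.choose_le_pow n r)
  calc _ ≤ _ := measure_mono hsub
    _ ≤ _ := measure_biUnion_finset_le_card_mul T E hE
    _ ≤ _ := ENNReal.natCast_mul_ofReal_le_ofReal hT (Real.exp_pos _).le
    _ = _ := by rw [mul_assoc]

lemma measure_hasWrongMatching_le (hM : IsCorrER P n q s A B π) (hq : 0 ≤ q)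
    (hs : 0 ≤ s) (hs1 : s ≤ 1) (m v : ℕ) (κ : ℝ) :
    P {ω | HasWrongMatching (A ω) (B ω) π m v κ} ≤ ENNReal.ofReal
      (n ^ m * (n ^ 2) ^ v * (m.choose ⌈κ⌉₊ * q ^ (2 * ⌈κ⌉₊)) ^ v) := by
  let T := powersetCard m (univ : Finset (Fin n)) ×ˢ
    powersetCard v (univ : Finset (Fin n × Fin n))
  let E : Finset (Fin n) × Finset (Fin n × Fin n) → Set Ω := fun SM =>
    {ω | IsWrongMatching π SM.1 SM.2 ∧ ∀ t ∈ SM.2, ⌈κ⌉₊ ≤ seedCount (A ω) (B ω) π SM.1 t.1 t.2}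
  have hsub : {ω | HasWrongMatching (A ω) (B ω) π m v κ} ⊆ ⋃ SM ∈ T, E SM := by
    rintro ω ⟨S, M, hS, hM, hW, hle⟩
    exact Set.mem_biUnion (x := (S, M))
      (mem_product.2 ⟨mem_powersetCard_univ.2 hS, mem_powersetCard_univ.2 hM⟩)
      ⟨hW, fun t ht => Nat.ceil_le.2 (hle t ht)⟩
  have hE : ∀ SM ∈ T, P (E SM) ≤
      ENNReal.ofReal ((m.choose ⌈κ⌉₊ * q ^ (2 * ⌈κ⌉₊)) ^ v) := by
    rintro ⟨S, M⟩ hSM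
    obtain ⟨hS, hMv⟩ := mem_product.1 hSM
    rw [mem_powersetCard_univ] at hS hMv
    by_cases hW : IsWrongMatching π S M
    · calc P (E (S, M)) ≤ P {ω | ∀ t ∈ M, ⌈κ⌉₊ ≤ seedCount (A ω) (B ω) π S t.1 t.2} :=
            measure_mono fun ω hω => hω.2
        _ ≤ _ := by simpa [hS, hMv] using hM.measure_forall_le_seedCount_le hq hs hs1 hW ⌈κ⌉₊
    · simp [E, hW]
  have hT : (T.card : ℝ) ≤ n ^ m * (n ^ 2) ^ v := by
    simp only [T, card_product, card_powersetCard, card_univ, Fintype.card_prod, Fintype.card_fin]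
    exact_mod_cast
      Nat.mul_le_mul (Nat.choose_le_pow n m) ((Nat.choose_le_pow _ v).trans_eq (by ring))
  calc _ ≤ _ := measure_mono hsub
    _ ≤ _ := measure_biUnion_finset_le_card_mul T E hE
    _ ≤ _ := ENNReal.natCast_mul_ofReal_le_ofReal hT (by positivity)

end IsCorrER

end Model

lemma seedDeficient_bound_le {m r : ℕ} {x κ : ℝ} (hn : 2 ≤ n) (hm : 1 ≤ m)
    (hr : 96 * Real.log n < r * x) (hrm : r ≤ m + 1) (hκ : κ ≤ m * x / 2) :
    (n : ℝ) ^ m * n ^ r * Real.exp (Real.log 2 * (r * κ) - x * (r * m) / 2) ≤ 1 / n ^ m := by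
  have hn0 : (0 : ℝ) < n := by positivity
  have hL : 0 < Real.log n := Real.log_pos (by exact_mod_cast hn)
  rw [Real.pow_eq_exp_mul_log hn0, Real.pow_eq_exp_mul_log hn0, one_div, ← Real.exp_neg,
    ← Real.exp_add, ← Real.exp_add, Real.exp_le_exp]
  have hm' : (1 : ℝ) ≤ m := by exact_mod_cast hm
  have hrm' : (r : ℝ) ≤ m + 1 := by exact_mod_cast hrm
  have hr0 : (0 : ℝ) ≤ r := r.cast_nonneg
  have hlog2 := Real.log_two_lt_d9
  have hκ' : Real.log 2 * (r * κ) ≤ Real.log 2 * (r * (m * x / 2)) :=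
    mul_le_mul_of_nonneg_left (mul_le_mul_of_nonneg_left hκ hr0) (Real.log_nonneg one_le_two)
  have hrx : 96 * (m * Real.log n) ≤ m * (r * x) := by nlinarith
  have hP : (Real.log 2 - 1) * (m * (r * x)) ≤ -0.3 * (m * (r * x)) :=
    mul_le_mul_of_nonneg_right (by linarith) (by nlinarith)
  nlinarith

lemma wrongMatching_bound_le {m r v k : ℕ} {x y : ℝ} (hn : 2 ≤ n) (hm : 1 ≤ m)
    (hr : 96 * Real.log n < r * x) (hrm : r ≤ m + 1) (hrv : r ≤ 3 * v) (hvr : 3 * v ≤ r + 2)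
    (hk : m * x / 2 ≤ k) (hy0 : 0 ≤ y) (hy : y ≤ (1 / 2) ^ k) :
    (n : ℝ) ^ m * (n ^ 2) ^ v * y ^ v ≤ 1 / n ^ m := by
  have hn0 : (0 : ℝ) < n := by positivity
  have hL : 0 < Real.log n := Real.log_pos (by exact_mod_cast hn)
  have hhalf : ((1 : ℝ) / 2) ^ k = Real.exp (-(k * Real.log 2)) := by
    rw [Real.exp_neg, Real.exp_nat_mul, Real.exp_log two_pos, one_div, inv_pow]
  calc (n : ℝ) ^ m * (n ^ 2) ^ v * y ^ v ≤ (n : ℝ) ^ m * (n ^ 2) ^ v * ((1 / 2) ^ k) ^ v :=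
        mul_le_mul_of_nonneg_left (pow_le_pow_left₀ hy0 hy v) (by positivity)
    _ ≤ 1 / n ^ m := by
      rw [← pow_mul, Real.pow_eq_exp_mul_log hn0, Real.pow_eq_exp_mul_log hn0, hhalf,
        ← Real.exp_nat_mul, one_div, ← Real.exp_neg, ← Real.exp_add, ← Real.exp_add,
        Real.exp_le_exp]
      have hm' : (1 : ℝ) ≤ m := by exact_mod_cast hm
      have hrv' : (r : ℝ) ≤ 3 * v := by exact_mod_cast hrv
      have hvm : (3 : ℝ) * v ≤ m + 3 := by exact_mod_cast (by omega : 3 * v ≤ m + 3)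
      have hx : 0 < x := by
        by_contra! hx
        nlinarith [mul_nonpos_of_nonneg_of_nonpos r.cast_nonneg hx]
      have hkv : 16 * (m * Real.log n) ≤ k * v := by
        nlinarith [mul_le_mul_of_nonneg_right hk v.cast_nonneg,
          mul_le_mul_of_nonneg_left hrv' (by positivity : (0 : ℝ) ≤ m * x / 2),
          mul_le_mul_of_nonneg_left hr.le m.cast_nonneg]
      have hlog2 : 16 * (m * Real.log n) * 0.69 ≤ k * v * Real.log 2 :=
        (mul_le_mul_of_nonneg_left (by linarith [Real.log_two_gt_d9]) (by positivity)).trans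
          (mul_le_mul_of_nonneg_right hkv (Real.log_nonneg one_le_two))
      have hvL : 3 * v * Real.log n ≤ (m + 3) * Real.log n := mul_le_mul_of_nonneg_right hvm hL.le
      push_cast
      nlinarith

theorem seeded_matching_first_stage
    (n m : ℕ) (q s : ℝ) (Ω : Type*) [MeasurableSpace Ω] (P : Measure Ω)
    [IsProbabilityMeasure P]
    (A B : Ω → Fin n → Fin n → Bool) (π : Equiv.Perm (Fin n))
    (hmodel : IsCorrER P n q s A B π)
    (hn : 2 ≤ n) (hm : 96 * Real.log n ≤ m * (q * s)) (hs : 12 * q ≤ s) :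
    ENNReal.ofReal (1 - 2 / (n : ℝ) ^ m) ≤
      P {ω | ∀ S : Finset (Fin n), S.card = m →
          ∀ π1 : Equiv.Perm (Fin n), (∀ i ∈ S, π1 i = π i) →
          (∀ π' : Equiv.Perm (Fin n), (∀ i ∈ S, π' i = π i) →
            matchWeight (A ω) (B ω) π S (m * q * s / 2) π'
              ≤ matchWeight (A ω) (B ω) π S (m * q * s / 2) π1) →
          ((univ.filter fun i => π1 i ≠ π i).card : ℝ) ≤ 192 * Real.log n / (q * s)} := by
  have hL : 0 < Real.log n := Real.log_pos (by exact_mod_cast hn)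
  have hmqs : 0 < m * (q * s) := by linarith
  have hqs : 0 < q * s := pos_of_mul_pos_right hmqs m.cast_nonneg
  have hm1 : 1 ≤ m := by exact_mod_cast pos_of_mul_pos_left hmqs hqs.le
  obtain ⟨hq, hs1⟩ := hmodel.pos_and_le_one hn hqs
  set κ : ℝ := m * q * s / 2 with hκ
  have hκm : κ = m * (q * s) / 2 := by rw [hκ, mul_assoc]
  set e := ⌊96 * Real.log n / (q * s)⌋₊
  have hr : 96 * Real.log n < (e + 1 : ℕ) * (q * s) := by
    push_cast; exact (div_lt_iff₀ hqs).1 (Nat.lt_floor_add_one _)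
  have hem : e ≤ m := Nat.floor_le_of_le ((div_le_iff₀ hqs).2 hm)
  have hchoose : m.choose ⌈κ⌉₊ * q ^ (2 * ⌈κ⌉₊) ≤ (1 / 2) ^ ⌈κ⌉₊ :=
    Nat.choose_mul_pow_le_half_pow (by nlinarith [Nat.le_ceil κ])
  have h1 := (hmodel.measure_seedDeficient_le hqs.le m (e + 1) κ).trans <|
    ENNReal.ofReal_le_ofReal <| seedDeficient_bound_le hn hm1 hr (by omega) hκm.le
  have h2 := (hmodel.measure_hasWrongMatching_le hq.le (pos_of_mul_pos_right hqs hq.le).le hs1 m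
    ((e + 3) / 3) κ).trans <| ENNReal.ofReal_le_ofReal <| wrongMatching_bound_le hn hm1 hr
      (by omega) (by omega) (by omega) (hκm ▸ Nat.le_ceil κ) (by positivity) hchoose
  refine ofReal_one_sub_le_measure_of_compl_le (by positivity)
    ((measure_mono ?_).trans ((measure_union_le _ _).trans ((add_le_add h1 h2).trans_eq ?_)))
  · intro ω hω
    by_contra hbad
    simp only [Set.mem_union, Set.mem_ofPred_eq, not_or] at hbad
    refine hω fun S hS π1 hext hmax => ?_
    calc ((univ.filter fun i => π1 i ≠ π i).card : ℝ) ≤ 2 * e := by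
          exact_mod_cast card_errors_le hS hbad.1 hbad.2 hext (hmax π fun _ _ => rfl)
      _ ≤ 2 * (96 * Real.log n / (q * s)) := by gcongr; exact Nat.floor_le (by positivity)
      _ = 192 * Real.log n / (q * s) := by ring
  · rw [← ENNReal.ofReal_add (by positivity) (by positivity)]
    ring_nf

end GraphMatching
end
end

section
/- In the correlated Erdős–Rényi model, let 0 ≤ ℓ ≤ n and assume (ℓ−1)qs ≥ 12nq² + 2 and (ℓ−1)qs ≥ 16·max{1, n−ℓ}·log n. Then with probability at least 1 − 3/n the following holds simultaneously: for every permutation π1 of [n] with |{i : π1(i) ≠ π*(i)}| ≤ n − ℓ, setting w_{ik} = Σ_{j∈[n]} A_{ij}B_{k,π1(j)}, one has min_{i∈[n]} w_{i,π*(i)} > max_{(i,k): k≠π*(i)} w_{ik}; hence the index pairs of the n largest values among {w_{ik}} are exactly {(i,π*(i)): i∈[n]}, and the final step of the seeded matching algorithm outputs π̂ = π*. -/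
/-!
Under `π*`, the similarity `w_{i,π*(i)}` counts the vertices `j ≠ i` with
`A_{ij} B_{π*(i)π*(j)} = 1`: independent events of probability `qs`. For `k = π*(u) ≠ π*(i)`,
`w_{ik}` counts the `j ∉ {i, u}` with `A_{ij} B_{π*(u)π*(j)} = 1`; these events involve the
distinct vertex pairs `{i,j}` and `{u,j}`, so they are independent of probability `q²`.
Exponential moments with base `2` (the binomial generating function at `z = 1/2` and `z = 2`)
and a union bound over the `n + n²` pairs show that, with `μ = (ℓ-1)qs`, outside an event of
probability at most `2/n` every true pair has `w_{i,π*(i)} > μ/2` and every false pair has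
`w_{ik} < μ/2 - 2(n-ℓ)`. Replacing `π*` by a `π1` with at most `n - ℓ` errors moves each `w_{ik}`
by at most `n - ℓ`, so the true pairs still beat the false ones, and then they are the only
possible set of `n` largest values.
-/

open MeasureTheory ProbabilityTheory Finset
open scoped ENNReal Classical

noncomputable section

namespace ProbabilityTheory

variable {Ω ι : Type*}

theorem pow_card_eq_sum_indicator [Fintype ι] (E : ι → Set Ω) (z : ℝ) (ω : Ω) :
    z ^ #{j | ω ∈ E j} = ∑ S : Finset ι, (⋂ j ∈ S, E j).indicator (fun _ => (z - 1) ^ #S) ω := by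
  have hprod : z ^ #{j | ω ∈ E j} = ∏ j, (1 + (E j).indicator (fun _ => z - 1) ω) := by
    simp only [Set.indicator_apply, add_ite, add_zero, add_sub_cancel, prod_ite, prod_const,
      one_pow, mul_one]
  rw [hprod, prod_one_add, powerset_univ]
  refine sum_congr rfl fun S _ => ?_
  simp only [Set.indicator_apply, Set.mem_iInter₂, prod_ite_zero, prod_const]

variable [MeasurableSpace Ω] {P : Measure Ω}

theorem ofReal_one_sub_le_prob_compl [IsProbabilityMeasure P] {S : Set Ω} {a : ℝ} (ha : 0 ≤ a)
    (hS : P S ≤ ENNReal.ofReal a) : ENNReal.ofReal (1 - a) ≤ P Sᶜ := by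
  rw [ENNReal.ofReal_sub _ ha, ENNReal.ofReal_one, tsub_le_iff_left, ← measure_univ (μ := P)]
  exact (measure_univ_le_add_compl S).trans (by gcongr)

variable {κ β : Type*} [MeasurableSpace β] {X : κ → Ω → β}

theorem iIndepFun.iIndepSet_preimage (hX : iIndepFun X P) (hXm : ∀ k, Measurable (X k))
    {σ : ι → κ} (hσ : σ.Injective) {t : Set β} (ht : MeasurableSet t) :
    iIndepSet (fun j => X (σ j) ⁻¹' t) P :=
  (iIndepSet_iff_meas_biInter fun _ => hXm _ ht).2 fun _ =>
    (hX.precomp hσ).meas_biInter fun _ _ => ⟨t, ht, rfl⟩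

theorem iIndepFun.iIndepSet_inter_preimage (hX : iIndepFun X P) (hXm : ∀ k, Measurable (X k))
    {σ τ : ι → κ} (hστ : (Sum.elim σ τ).Injective) {s t : Set β} (hs : MeasurableSet s)
    (ht : MeasurableSet t) :
    iIndepSet (fun j => X (σ j) ⁻¹' s ∩ X (τ j) ⁻¹' t) P := by
  have hprod : ∀ S : Finset ι, P (⋂ j ∈ S, (X (σ j) ⁻¹' s ∩ X (τ j) ⁻¹' t))
      = ∏ j ∈ S, P (X (σ j) ⁻¹' s) * P (X (τ j) ⁻¹' t) := fun S => by
    have := (hX.precomp hστ).meas_biInter (S := S.disjSum S)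
      (s := fun k => X (Sum.elim σ τ k) ⁻¹' Sum.elim (fun _ => s) (fun _ => t) k)
      fun k _ => ⟨_, by cases k <;> assumption, rfl⟩
    simp only [prod_disjSum, Sum.elim_inl, Sum.elim_inr, ← prod_mul_distrib] at this
    rw [← this]
    congr 1
    ext ω
    simp [Finset.mem_disjSum, forall_and]
  refine (iIndepSet_iff_meas_biInter fun _ => (hXm _ hs).inter (hXm _ ht)).2 fun S => ?_
  rw [hprod S]
  exact prod_congr rfl fun j _ => by simpa using (hprod {j}).symm

variable [Fintype ι] {E : ι → Set Ω} {θ : ℝ}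

theorem integrable_pow_card [IsFiniteMeasure P] (hmeas : ∀ j, MeasurableSet (E j)) (z : ℝ) :
    Integrable (fun ω => z ^ #{j | ω ∈ E j}) P := by
  simp only [pow_card_eq_sum_indicator]
  exact integrable_finsetSum _ fun S _ =>
    (integrable_const _).indicator (S.measurableSet_biInter fun j _ => hmeas j)

theorem iIndepSet.integral_pow_card (hind : iIndepSet E P) (hmeas : ∀ j, MeasurableSet (E j))
    (hprob : ∀ j, P.real (E j) = θ) (z : ℝ) :
    ∫ ω, z ^ #{j | ω ∈ E j} ∂P = (1 + (z - 1) * θ) ^ Fintype.card ι := by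
  have := hind.isProbabilityMeasure
  simp only [pow_card_eq_sum_indicator]
  rw [integral_finsetSum _ fun S _ => (integrable_const _).indicator
    (S.measurableSet_biInter fun j _ => hmeas j), ← card_univ, ← prod_const, prod_one_add,
    powerset_univ]
  refine sum_congr rfl fun S _ => ?_
  rw [integral_indicator_const _ (S.measurableSet_biInter fun j _ => hmeas j), measureReal_def,
    hind.meas_biInter, ENNReal.toReal_prod]
  simp only [← measureReal_def, hprob, prod_const, smul_eq_mul, mul_pow, mul_comm]

theorem iIndepSet.measureReal_rpow_le_pow_card_le (hind : iIndepSet E P)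
    (hmeas : ∀ j, MeasurableSet (E j)) (hprob : ∀ j, P.real (E j) = θ) {z : ℝ} (hz : 0 < z)
    (x : ℝ) :
    P.real {ω | z ^ x ≤ z ^ #{j | ω ∈ E j}} ≤ z ^ (-x) * (1 + (z - 1) * θ) ^ Fintype.card ι := by
  have := hind.isProbabilityMeasure
  have hmarkov := mul_meas_ge_le_integral_of_nonneg (ae_of_all _ fun ω => by positivity)
    (integrable_pow_card (P := P) hmeas z) (z ^ x)
  rw [hind.integral_pow_card hmeas hprob] at hmarkov
  calc P.real {ω | z ^ x ≤ z ^ #{j | ω ∈ E j}}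
      = z ^ (-x) * (z ^ x * P.real {ω | z ^ x ≤ z ^ #{j | ω ∈ E j}}) := by
        rw [← mul_assoc, ← Real.rpow_add hz, neg_add_cancel, Real.rpow_zero, one_mul]
    _ ≤ _ := by gcongr

theorem iIndepSet.measure_le_card_le (hind : iIndepSet E P) (hmeas : ∀ j, MeasurableSet (E j))
    (hprob : ∀ j, P.real (E j) = θ) (x : ℝ) :
    P {ω | x ≤ #{j | ω ∈ E j}} ≤ ENNReal.ofReal (2 ^ (-x) * (1 + θ) ^ Fintype.card ι) := by
  have := hind.isProbabilityMeasure
  have hsub : {ω | x ≤ #{j | ω ∈ E j}} ⊆ {ω | (2 : ℝ) ^ x ≤ 2 ^ #{j | ω ∈ E j}} :=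
    Set.ofPred_subset_ofPred.2 fun ω hω => by
      rw [← Real.rpow_natCast]
      exact Real.rpow_le_rpow_of_exponent_le one_le_two hω
  rw [← ofReal_measureReal]
  refine ENNReal.ofReal_le_ofReal ((measureReal_mono hsub).trans ?_)
  exact (hind.measureReal_rpow_le_pow_card_le hmeas hprob two_pos x).trans_eq (by norm_num)

theorem iIndepSet.measure_card_le_le (hind : iIndepSet E P) (hmeas : ∀ j, MeasurableSet (E j))
    (hprob : ∀ j, P.real (E j) = θ) (x : ℝ) :
    P {ω | (#{j | ω ∈ E j} : ℝ) ≤ x} ≤ ENNReal.ofReal (2 ^ x * (1 - θ / 2) ^ Fintype.card ι) := by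
  have := hind.isProbabilityMeasure
  have hsub : {ω | (#{j | ω ∈ E j} : ℝ) ≤ x} ⊆ {ω | (2⁻¹ : ℝ) ^ x ≤ 2⁻¹ ^ #{j | ω ∈ E j}} :=
    Set.ofPred_subset_ofPred.2 fun ω hω => by
      rw [← Real.rpow_natCast]
      exact Real.rpow_le_rpow_of_exponent_ge (by norm_num) (by norm_num) hω
  rw [← ofReal_measureReal]
  refine ENNReal.ofReal_le_ofReal ((measureReal_mono hsub).trans ?_)
  refine (hind.measureReal_rpow_le_pow_card_le hmeas hprob (inv_pos.2 two_pos) x).trans_eq ?_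
  rw [Real.inv_rpow zero_le_two, Real.rpow_neg zero_le_two, inv_inv]
  ring

end ProbabilityTheory

namespace GraphMatching

theorem params_nonneg_of_erPairLaw_univ {q s : ℝ} (h : erPairLaw q s Set.univ = 1) :
    0 ≤ q * s ∧ 0 ≤ q * (1 - s) ∧ 0 ≤ 1 - 2 * q + q * s := by
  have htot := congrArg ENNReal.toReal h
  simp only [erPairLaw, Measure.coe_add, Measure.coe_smul, Pi.add_apply, Pi.smul_apply,
    measure_univ, smul_eq_mul, mul_one, ne_eq, ENNReal.add_eq_top, ENNReal.ofReal_ne_top, or_self,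
    not_false_eq_true, ENNReal.toReal_add, ENNReal.toReal_ofReal', ENNReal.toReal_one] at htot
  refine ⟨?_, ?_, ?_⟩ <;>
    linarith [le_max_left (q * s) 0, le_max_right (q * s) 0, le_max_left (q * (1 - s)) 0,
      le_max_right (q * (1 - s)) 0, le_max_left (1 - 2 * q + q * s) 0,
      le_max_right (1 - 2 * q + q * s) 0]

/-- The unordered pair `{i, j}` as an index of the i.i.d. family of `IsCorrER.indep`. -/
def pairIdx {i j : Fin n} (h : i ≠ j) : {p : Fin n × Fin n // p.1 < p.2} :=
  ⟨(min i j, max i j), min_lt_max.2 h⟩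

theorem pairIdx_eq_pairIdx_iff {i j i' j' : Fin n} (h : i ≠ j) (h' : i' ≠ j') :
    pairIdx h = pairIdx h' ↔ i = i' ∧ j = j' ∨ i = j' ∧ j = i' := by
  simp only [pairIdx, Subtype.mk.injEq, Prod.mk.injEq, Fin.ext_iff, Fin.coe_min, Fin.coe_max]
  omega

def commonEdge {Ω : Type*} (A B : Ω → Fin n → Fin n → Bool) (π : Equiv.Perm (Fin n))
    (i u j : Fin n) : Set Ω :=
  {ω | A ω i j = true ∧ B ω (π u) (π j) = true}

theorem card_commonEdge_subtype {Ω : Type*} {A B : Ω → Fin n → Fin n → Bool}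
    {π : Equiv.Perm (Fin n)} {i u : Fin n} {ω : Ω} {p : Fin n → Prop} [Fintype (Subtype p)]
    (hp : ∀ j, ω ∈ commonEdge A B π i u j → p j) :
    #{j : Subtype p | ω ∈ commonEdge A B π i u j} = wSim (A ω) (B ω) π i (π u) := by
  rw [wSim, ← card_map (Function.Embedding.subtype p)]
  congr 1
  ext j
  simp only [mem_map, mem_filter, mem_univ, true_and, Function.Embedding.coe_subtype]
  exact ⟨fun ⟨j', hj', hj⟩ => hj ▸ hj', fun hj => ⟨⟨j, hp j hj⟩, hj, rfl⟩⟩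

theorem wSim_le_wSim_add_card_ne (A B : Fin n → Fin n → Bool) (π₁ π₂ : Equiv.Perm (Fin n))
    (i k : Fin n) : wSim A B π₁ i k ≤ wSim A B π₂ i k + #{j | π₁ j ≠ π₂ j} := by
  refine (card_le_card fun j hj => ?_).trans (card_union_le _ _)
  simp only [mem_filter, mem_union, mem_univ, true_and] at hj ⊢
  by_cases he : π₁ j = π₂ j
  · exact .inl (he ▸ hj)
  · exact .inr he

def Separated (A B : Fin n → Fin n → Bool) (π : Equiv.Perm (Fin n)) (x y : ℝ) : Prop :=
  (∀ i, x < wSim A B π i (π i)) ∧ ∀ i k, k ≠ π i → (wSim A B π i k : ℝ) < y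

theorem Separated.wSim_lt {A B : Fin n → Fin n → Bool} {π π₁ : Equiv.Perm (Fin n)} {x y : ℝ}
    (hsep : Separated A B π x y) (herr : y + 2 * #{j | π₁ j ≠ π j} ≤ x) (i : Fin n)
    {i' k' : Fin n} (hk' : k' ≠ π i') : wSim A B π₁ i' k' < wSim A B π₁ i (π i) := by
  have hgood : (wSim A B π i (π i) : ℝ) ≤ wSim A B π₁ i (π i) + #{j | π₁ j ≠ π j} := by
    have := wSim_le_wSim_add_card_ne A B π π₁ i (π i)
    simp only [ne_comm (a := π _)] at this
    exact_mod_cast this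
  have hbad : (wSim A B π₁ i' k' : ℝ) ≤ wSim A B π i' k' + #{j | π₁ j ≠ π j} := by
    exact_mod_cast wSim_le_wSim_add_card_ne A B π₁ π i' k'
  exact_mod_cast (by linarith [hsep.1 i, hsep.2 i' k' hk'] :
    (wSim A B π₁ i' k' : ℝ) < wSim A B π₁ i (π i))

theorem eq_of_card_eq_of_forall_lt {α β : Type*} [LinearOrder β] {w : α → β} {T D : Finset α}
    (hcard : #T = #D) (hD : ∀ p ∈ D, ∀ p' ∉ D, w p' < w p)
    (hT : ∀ p ∈ T, ∀ p' ∉ T, w p' ≤ w p) : T = D := by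
  by_contra hne
  obtain ⟨p, hpD, hpT⟩ := not_subset.1 fun hDT : D ⊆ T =>
    hne (eq_of_subset_of_card_le hDT hcard.le).symm
  obtain ⟨p', hp'T, hp'D⟩ := not_subset.1 fun hTD : T ⊆ D =>
    hne (eq_of_subset_of_card_le hTD hcard.ge)
  exact (hT p' hp'T p hpT).not_gt (hD p hpD p' hp'D)

theorem Separated.top_eq_image {A B : Fin n → Fin n → Bool} {π π₁ : Equiv.Perm (Fin n)}
    {x y : ℝ} (hsep : Separated A B π x y) (herr : y + 2 * #{j | π₁ j ≠ π j} ≤ x)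
    {T : Finset (Fin n × Fin n)} (hT : #T = n)
    (htop : ∀ p ∈ T, ∀ p' ∉ T, wSim A B π₁ p'.1 p'.2 ≤ wSim A B π₁ p.1 p.2) :
    T = univ.image fun i => (i, π i) := by
  refine eq_of_card_eq_of_forall_lt (w := fun p => wSim A B π₁ p.1 p.2) ?_ ?_ htop
  · rw [hT, card_image_of_injective _ fun a b hab => (Prod.ext_iff.1 hab).1, card_univ,
      Fintype.card_fin]
  · simp only [mem_image, mem_univ, true_and, forall_exists_index, forall_apply_eq_imp_iff]
    intro i p' hp'
    exact hsep.wSim_lt herr i fun hk => hp' ⟨p'.1, by rw [← hk]⟩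

theorem one_add_pow_le_exp {a : ℝ} (ha : -1 ≤ a) (m : ℕ) : (1 + a) ^ m ≤ Real.exp (m * a) := by
  rw [Real.exp_nat_mul]
  exact pow_le_pow_left₀ (by linarith) (by linarith [Real.add_one_le_exp a]) m

theorem natCast_mul_two_rpow_mul_pow_le {n : ℕ} (hn : 0 < n) {p μ : ℝ} (hp : p ≤ 2)
    (hμ : μ ≤ (n - 1) * p) (hlog : 16 * Real.log n ≤ μ) :
    n * (2 ^ (μ / 2) * (1 - p / 2) ^ (n - 1)) ≤ 1 / n := by
  have hL := Real.log_natCast_nonneg n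
  have hl := Real.log_two_lt_d9
  have hcast : ((n - 1 : ℕ) : ℝ) = n - 1 := by rw [Nat.cast_sub hn]; norm_num
  calc (n : ℝ) * (2 ^ (μ / 2) * (1 - p / 2) ^ (n - 1))
      ≤ Real.exp (Real.log n) * (Real.exp (Real.log 2 * (μ / 2))
          * Real.exp ((n - 1 : ℕ) * -(p / 2))) := by
        rw [Real.exp_log (by positivity), ← Real.rpow_def_of_pos two_pos, sub_eq_add_neg]
        gcongr
        exact one_add_pow_le_exp (by linarith) _
    _ = Real.exp (Real.log n + Real.log 2 * (μ / 2) - (n - 1) * p / 2) := by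
        rw [← Real.exp_add, ← Real.exp_add, hcast]
        ring_nf
    _ ≤ Real.exp (-Real.log n) := by
        gcongr
        -- `2 log n ≤ (1 - log 2) μ / 2` because `μ ≥ 16 log n` and `log 2 < 0.7`
        nlinarith [mul_nonneg (sub_nonneg.2 hlog) (by linarith : (0 : ℝ) ≤ 1 - Real.log 2),
          mul_nonneg hL (by linarith : (0 : ℝ) ≤ 0.7 - Real.log 2)]
    _ = 1 / n := by rw [Real.exp_neg, Real.exp_log (by positivity), one_div]

theorem natCast_sq_mul_two_rpow_mul_pow_le {n : ℕ} (hn : 4 ≤ n) {q μ ρ : ℝ} (hρ : 0 ≤ ρ)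
    (hq : 12 * n * q ^ 2 ≤ μ) (hlog : 16 * max 1 ρ * Real.log n ≤ μ) :
    n ^ 2 * (2 ^ (-(μ / 2 - 2 * ρ)) * (1 + q ^ 2) ^ (n - 2)) ≤ 1 / n := by
  have hL := Real.log_natCast_nonneg n
  have hl := Real.log_two_gt_d9
  have hL2 : 2 * Real.log 2 ≤ Real.log n := by
    rw [← Real.log_rpow two_pos]
    exact Real.log_le_log (by norm_num) (by norm_num; exact_mod_cast hn)
  have hcast : ((n - 2 : ℕ) : ℝ) * q ^ 2 ≤ n * q ^ 2 := by
    gcongr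
    exact_mod_cast Nat.sub_le n 2
  calc (n : ℝ) ^ 2 * (2 ^ (-(μ / 2 - 2 * ρ)) * (1 + q ^ 2) ^ (n - 2))
      ≤ Real.exp (Real.log n) ^ 2 * (Real.exp (Real.log 2 * -(μ / 2 - 2 * ρ))
          * Real.exp ((n - 2 : ℕ) * q ^ 2)) := by
        rw [Real.exp_log (by positivity), ← Real.rpow_def_of_pos two_pos]
        gcongr
        exact one_add_pow_le_exp (by nlinarith) _
    _ = Real.exp (2 * Real.log n - Real.log 2 * (μ / 2 - 2 * ρ) + (n - 2 : ℕ) * q ^ 2) := by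
        rw [sq, ← Real.exp_add, ← Real.exp_add, ← Real.exp_add]
        ring_nf
    _ ≤ Real.exp (-Real.log n) := by
        gcongr
        -- `3 log n + 2ρ log 2 + μ/12 ≤ (3/16 + 1/16 + 1/12) μ = μ/3 ≤ (μ/2) log 2`
        nlinarith [mul_nonneg (sub_nonneg.2 (le_max_left 1 ρ)) hL,
          mul_nonneg (sub_nonneg.2 (le_max_right 1 ρ)) hL, mul_nonneg hρ (sub_nonneg.2 hL2),
          mul_nonneg (by nlinarith [le_max_left 1 ρ] : 0 ≤ μ)
            (by linarith : (0 : ℝ) ≤ Real.log 2 - 2 / 3)]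
    _ = 1 / n := by rw [Real.exp_neg, Real.exp_log (by positivity), one_div]

namespace IsCorrER

variable {Ω : Type*} [MeasurableSpace Ω] {P : Measure Ω} {q s : ℝ}
  {A B : Ω → Fin n → Fin n → Bool} {π : Equiv.Perm (Fin n)}

def edgePair (A B : Ω → Fin n → Fin n → Bool) (π : Equiv.Perm (Fin n))
    (p : {p : Fin n × Fin n // p.1 < p.2}) (ω : Ω) : Bool × Bool :=
  (A ω p.1.1 p.1.2, B ω (π p.1.1) (π p.1.2))

theorem iIndepFun_edgePair (h : IsCorrER P n q s A B π) : iIndepFun (edgePair A B π) P :=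
  h.indep

theorem edgePair_pairIdx (h : IsCorrER P n q s A B π) {i j : Fin n} (hij : i ≠ j) (ω : Ω) :
    edgePair A B π (pairIdx hij) ω = (A ω i j, B ω (π i) (π j)) := by
  rcases le_total i j with hle | hle
  · simp [edgePair, pairIdx, hle]
  · simp [edgePair, pairIdx, hle, h.symmA ω i, h.symmB ω (π i)]

theorem measurable_edgePair (h : IsCorrER P n q s A B π) (p : {p : Fin n × Fin n // p.1 < p.2}) :
    Measurable (edgePair A B π p) :=
  h.meas p.1.1 p.1.2

theorem measureReal_edgePair_preimage (h : IsCorrER P n q s A B π)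
    (p : {p : Fin n × Fin n // p.1 < p.2}) (t : Set (Bool × Bool)) :
    P.real (edgePair A B π p ⁻¹' t) = (erPairLaw q s t).toReal := by
  rw [measureReal_def, ← h.law p.1.1 p.1.2 p.2, Measure.map_apply (h.meas _ _) .of_discrete]
  rfl

theorem params_nonneg (h : IsCorrER P n q s A B π) (p : {p : Fin n × Fin n // p.1 < p.2}) :
    0 ≤ q * s ∧ 0 ≤ q * (1 - s) ∧ 0 ≤ 1 - 2 * q + q * s := by
  have := h.indep.isProbabilityMeasure
  refine params_nonneg_of_erPairLaw_univ ?_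
  rw [← h.law p.1.1 p.1.2 p.2, Measure.map_apply (h.meas _ _) .univ]
  simp

theorem commonEdge_self_eq (h : IsCorrER P n q s A B π) {i j : Fin n} (hij : i ≠ j) :
    commonEdge A B π i i j = edgePair A B π (pairIdx hij) ⁻¹' {(true, true)} := by
  ext ω
  simp [commonEdge, h.edgePair_pairIdx]

theorem commonEdge_eq (h : IsCorrER P n q s A B π) {i u j : Fin n} (hij : i ≠ j) (huj : u ≠ j) :
    commonEdge A B π i u j = edgePair A B π (pairIdx hij) ⁻¹' {x | x.1 = true}
      ∩ edgePair A B π (pairIdx huj) ⁻¹' {x | x.2 = true} := by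
  ext ω
  simp [commonEdge, h.edgePair_pairIdx]

theorem measureReal_commonEdge_self (h : IsCorrER P n q s A B π) {i j : Fin n} (hij : i ≠ j) :
    P.real (commonEdge A B π i i j) = q * s := by
  rw [h.commonEdge_self_eq hij, h.measureReal_edgePair_preimage]
  simp [erPairLaw, (h.params_nonneg (pairIdx hij)).1]

theorem measureReal_commonEdge (h : IsCorrER P n q s A B π) {i u j : Fin n} (hiu : i ≠ u)
    (hij : i ≠ j) (huj : u ≠ j) :
    P.real (commonEdge A B π i u j) = q ^ 2 := by
  have hne : pairIdx hij ≠ pairIdx huj := by simp [pairIdx_eq_pairIdx_iff, hiu, hij]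
  obtain ⟨h1, h2, -⟩ := h.params_nonneg (pairIdx hij)
  rw [h.commonEdge_eq hij huj, measureReal_def,
    (h.iIndepFun_edgePair.indepFun hne).measure_inter_preimage_eq_mul _ _ .of_discrete .of_discrete,
    ENNReal.toReal_mul, ← measureReal_def, ← measureReal_def, h.measureReal_edgePair_preimage,
    h.measureReal_edgePair_preimage]
  simp [erPairLaw, ENNReal.toReal_add, h1, h2, ← mul_add, sq]

theorem iIndepSet_commonEdge_self (h : IsCorrER P n q s A B π) (i : Fin n) :
    iIndepSet (fun j : {j // j ≠ i} => commonEdge A B π i i j) P := by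
  have hσ : (fun j : {j // j ≠ i} => pairIdx j.2.symm).Injective := fun j j' hjj' => by
    rcases (pairIdx_eq_pairIdx_iff _ _).1 hjj' with ⟨-, hj⟩ | ⟨hj, -⟩
    · exact Subtype.ext hj
    · exact absurd hj.symm j'.2
  rw [show (fun j : {j // j ≠ i} => commonEdge A B π i i j) = _ from
    funext fun j => h.commonEdge_self_eq j.2.symm]
  exact h.iIndepFun_edgePair.iIndepSet_preimage h.measurable_edgePair hσ
      (.of_discrete (s := {(true, true)}))

theorem iIndepSet_commonEdge (h : IsCorrER P n q s A B π) {i u : Fin n} (hiu : i ≠ u) :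
    iIndepSet (fun j : {j // j ≠ i ∧ j ≠ u} => commonEdge A B π i u j) P := by
  have hστ : (Sum.elim (fun j : {j // j ≠ i ∧ j ≠ u} => pairIdx j.2.1.symm)
      fun j : {j // j ≠ i ∧ j ≠ u} => pairIdx j.2.2.symm).Injective := by
    refine Function.Injective.sumElim (fun j j' hjj' => ?_) (fun j j' hjj' => ?_) fun j j' => ?_
    · rcases (pairIdx_eq_pairIdx_iff _ _).1 hjj' with ⟨-, hj⟩ | ⟨hj, -⟩
      · exact Subtype.ext hj
      · exact absurd hj.symm j'.2.1
    · rcases (pairIdx_eq_pairIdx_iff _ _).1 hjj' with ⟨-, hj⟩ | ⟨hj, -⟩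
      · exact Subtype.ext hj
      · exact absurd hj.symm j'.2.2
    · rw [Ne, pairIdx_eq_pairIdx_iff]
      rintro (⟨hi, -⟩ | ⟨hi, -⟩)
      exacts [hiu hi, j'.2.1 hi.symm]
  rw [show (fun j : {j // j ≠ i ∧ j ≠ u} => commonEdge A B π i u j) = _ from
    funext fun j => h.commonEdge_eq j.2.1.symm j.2.2.symm]
  exact h.iIndepFun_edgePair.iIndepSet_inter_preimage h.measurable_edgePair hστ .of_discrete
      .of_discrete

theorem measure_wSim_self_le (h : IsCorrER P n q s A B π) (i : Fin n) (x : ℝ) :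
    P {ω | (wSim (A ω) (B ω) π i (π i) : ℝ) ≤ x}
      ≤ ENNReal.ofReal (2 ^ x * (1 - q * s / 2) ^ (n - 1)) := by
  have hcount (ω : Ω) :
      #{j : {j // j ≠ i} | ω ∈ commonEdge A B π i i j} = wSim (A ω) (B ω) π i (π i) :=
    card_commonEdge_subtype fun j hj hji => by simp [commonEdge, hji, h.diagA] at hj
  have hcard : Fintype.card {j // j ≠ i} = n - 1 := by simp [Fintype.card_subtype_compl]
  have htail := (h.iIndepSet_commonEdge_self i).measure_card_le_le
    (fun j => h.commonEdge_self_eq j.2.symm ▸ h.measurable_edgePair _ .of_discrete)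
    (fun j => h.measureReal_commonEdge_self j.2.symm) x
  simpa only [hcount, hcard] using htail

theorem measure_le_wSim_of_ne (h : IsCorrER P n q s A B π) {i k : Fin n} (hk : k ≠ π i)
    (x : ℝ) :
    P {ω | x ≤ wSim (A ω) (B ω) π i k} ≤ ENNReal.ofReal (2 ^ (-x) * (1 + q ^ 2) ^ (n - 2)) := by
  obtain ⟨u, rfl⟩ := π.surjective k
  have hiu : i ≠ u := fun hiu => hk (hiu ▸ rfl)
  have hcount (ω : Ω) : #{j : {j // j ≠ i ∧ j ≠ u} | ω ∈ commonEdge A B π i u j}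
      = wSim (A ω) (B ω) π i (π u) :=
    card_commonEdge_subtype fun j hj => ⟨fun hji => by simp [commonEdge, hji, h.diagA] at hj,
      fun hju => by simp [commonEdge, hju, h.diagB] at hj⟩
  have hcard : Fintype.card {j // j ≠ i ∧ j ≠ u} = n - 2 := by
    rw [Fintype.card_subtype, filter_and, filter_ne', filter_ne', inter_erase, inter_univ,
      card_erase_of_mem (mem_erase.2 ⟨hiu.symm, mem_univ u⟩), card_erase_of_mem (mem_univ i),
      card_univ, Fintype.card_fin, Nat.sub_sub]
  have htail := (h.iIndepSet_commonEdge hiu).measure_le_card_le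
    (fun j => h.commonEdge_eq j.2.1.symm j.2.2.symm ▸
      (h.measurable_edgePair _ .of_discrete).inter (h.measurable_edgePair _ .of_discrete))
    (fun j => h.measureReal_commonEdge hiu j.2.1.symm j.2.2.symm) x
  simpa only [hcount, hcard] using htail

theorem measure_not_separated_le (h : IsCorrER P n q s A B π) (x y : ℝ) :
    P {ω | ¬ Separated (A ω) (B ω) π x y}
      ≤ ENNReal.ofReal (n * (2 ^ x * (1 - q * s / 2) ^ (n - 1)))
        + ENNReal.ofReal (n ^ 2 * (2 ^ (-y) * (1 + q ^ 2) ^ (n - 2))) := by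
  have hsub : {ω | ¬ Separated (A ω) (B ω) π x y}
      ⊆ (⋃ i, {ω | (wSim (A ω) (B ω) π i (π i) : ℝ) ≤ x})
        ∪ ⋃ p : Fin n × Fin n, {ω | p.2 ≠ π p.1 ∧ y ≤ wSim (A ω) (B ω) π p.1 p.2} := by
    intro ω hω
    simp only [Separated, not_and_or, not_forall, not_lt] at hω
    rcases hω with ⟨i, hi⟩ | ⟨i, k, hk, hik⟩
    · exact .inl (Set.mem_iUnion.2 ⟨i, hi⟩)
    · exact .inr (Set.mem_iUnion.2 ⟨(i, k), hk, hik⟩)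
  have hfalse (p : Fin n × Fin n) : P {ω | p.2 ≠ π p.1 ∧ y ≤ wSim (A ω) (B ω) π p.1 p.2}
      ≤ ENNReal.ofReal (2 ^ (-y) * (1 + q ^ 2) ^ (n - 2)) := by
    by_cases hp : p.2 = π p.1
    · simp [hp]
    · exact (measure_mono fun ω hω => hω.2).trans (h.measure_le_wSim_of_ne hp y)
  calc P {ω | ¬ Separated (A ω) (B ω) π x y}
      ≤ ∑ i, P {ω | (wSim (A ω) (B ω) π i (π i) : ℝ) ≤ x}
        + ∑ p : Fin n × Fin n, P {ω | p.2 ≠ π p.1 ∧ y ≤ wSim (A ω) (B ω) π p.1 p.2} :=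
        (measure_mono hsub).trans ((measure_union_le _ _).trans
          (add_le_add (measure_iUnion_fintype_le _ _) (measure_iUnion_fintype_le _ _)))
    _ ≤ ∑ _i : Fin n, ENNReal.ofReal (2 ^ x * (1 - q * s / 2) ^ (n - 1))
        + ∑ _p : Fin n × Fin n, ENNReal.ofReal (2 ^ (-y) * (1 + q ^ 2) ^ (n - 2)) := by
        gcongr with i _ p _
        exacts [h.measure_wSim_self_le i x, hfalse p]
    _ = _ := by
        simp only [sum_const, card_univ, Fintype.card_prod, Fintype.card_fin, nsmul_eq_mul]
        rw [ENNReal.ofReal_mul (p := n) (by positivity),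
          ENNReal.ofReal_mul (p := n ^ 2) (by positivity), ENNReal.ofReal_pow (by positivity),
          ENNReal.ofReal_natCast]
        push_cast
        ring

theorem measure_not_separated_le_two_div (h : IsCorrER P n q s A B π) {ℓ : ℕ} (hn : 4 ≤ n)
    (hℓn : ℓ ≤ n) (h1 : 12 * n * q ^ 2 + 2 ≤ ((ℓ : ℝ) - 1) * q * s)
    (h2 : 16 * max 1 ((n : ℝ) - ℓ) * Real.log n ≤ ((ℓ : ℝ) - 1) * q * s) :
    P {ω | ¬ Separated (A ω) (B ω) π (((ℓ : ℝ) - 1) * q * s / 2)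
      (((ℓ : ℝ) - 1) * q * s / 2 - 2 * (n - ℓ))} ≤ ENNReal.ofReal (2 / n) := by
  obtain ⟨hqs, hq, hq'⟩ := h.params_nonneg ⟨(⟨0, by omega⟩, ⟨1, by omega⟩), Fin.mk_lt_mk.2 one_pos⟩
  have hℓ : (ℓ : ℝ) ≤ n := Nat.cast_le.2 hℓn
  have hlog := Real.log_natCast_nonneg n
  refine (h.measure_not_separated_le _ _).trans ?_
  calc _ ≤ ENNReal.ofReal (1 / n) + ENNReal.ofReal (1 / n) := by
        gcongr
        · exact natCast_mul_two_rpow_mul_pow_le (by omega) (by nlinarith) (by nlinarith)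
            (by nlinarith [le_max_left 1 ((n : ℝ) - ℓ)])
        · exact natCast_sq_mul_two_rpow_mul_pow_le hn (sub_nonneg.2 hℓ) (by linarith) h2
    _ = ENNReal.ofReal (2 / n) := by
        rw [← ENNReal.ofReal_add (by positivity) (by positivity)]
        ring_nf

end IsCorrER

theorem seeded_matching_last_stage_general
    (n : ℕ) (q s : ℝ) (ℓ : ℕ) (Ω : Type*) [MeasurableSpace Ω] (P : Measure Ω)
    (A B : Ω → Fin n → Fin n → Bool) (π : Equiv.Perm (Fin n))
    (hmodel : IsCorrER P n q s A B π)
    (hℓn : ℓ ≤ n)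
    (h1 : 12 * n * q ^ 2 + 2 ≤ ((ℓ : ℝ) - 1) * q * s)
    (h2 : 16 * max 1 ((n : ℝ) - ℓ) * Real.log n ≤ ((ℓ : ℝ) - 1) * q * s) :
    ENNReal.ofReal (1 - 3 / n) ≤
      P {ω | ∀ π1 : Equiv.Perm (Fin n),
          (univ.filter fun i => π1 i ≠ π i).card ≤ n - ℓ →
          (∀ i i' k' : Fin n, k' ≠ π i' →
              wSim (A ω) (B ω) π1 i' k' < wSim (A ω) (B ω) π1 i (π i)) ∧
          ∀ T : Finset (Fin n × Fin n), T.card = n →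
            (∀ p ∈ T, ∀ p' ∉ T, wSim (A ω) (B ω) π1 p'.1 p'.2 ≤ wSim (A ω) (B ω) π1 p.1 p.2) →
            T = Finset.univ.image fun i => (i, π i)} := by
  have := hmodel.indep.isProbabilityMeasure
  obtain rfl | hn0 := Nat.eq_zero_or_pos n
  -- `3 / 0 = 0`, so for `n = 0` the claim is that the (vacuous) event has probability one
  · refine (ENNReal.ofReal_le_one.2 (by simp)).trans (measure_univ.symm.trans_le
      (measure_mono fun ω _ π1 _ => ⟨fun i => i.elim0, fun T _ _ => Subsingleton.elim _ _⟩))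
  obtain hn | hn := lt_or_ge n 4
  · rw [ENNReal.ofReal_eq_zero.2]
    · exact zero_le
    · rw [sub_nonpos, le_div_iff₀ (by positivity)]
      norm_cast
      omega
  have herr (π₁ : Equiv.Perm (Fin n)) (hπ₁ : #{i | π₁ i ≠ π i} ≤ n - ℓ) :
      ((ℓ : ℝ) - 1) * q * s / 2 - 2 * (n - ℓ) + 2 * #{i | π₁ i ≠ π i}
        ≤ ((ℓ : ℝ) - 1) * q * s / 2 := by
    have : (#{i | π₁ i ≠ π i} : ℝ) ≤ n - ℓ := by
      rw [← Nat.cast_sub hℓn]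
      exact_mod_cast hπ₁
    linarith
  have hsep := ofReal_one_sub_le_prob_compl (by positivity)
    (hmodel.measure_not_separated_le_two_div hn hℓn h1 h2)
  refine (ENNReal.ofReal_le_ofReal (by gcongr; norm_num)).trans (hsep.trans (measure_mono ?_))
  intro ω hω π₁ hπ₁
  have hω : Separated _ _ _ _ _ := not_not.1 hω
  exact ⟨fun i _ _ hk => hω.wSim_lt (herr π₁ hπ₁) i hk,
    fun _ hT htop => hω.top_eq_image (herr π₁ hπ₁) hT htop⟩

theorem seeded_matching_last_stage
    (n : ℕ) (q s : ℝ) (ℓ : ℕ) (Ω : Type*) [MeasurableSpace Ω] (P : Measure Ω)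
    [IsProbabilityMeasure P]
    (A B : Ω → Fin n → Fin n → Bool) (π : Equiv.Perm (Fin n))
    (hmodel : IsCorrER P n q s A B π)
    (hℓn : ℓ ≤ n)
    (h1 : 12 * n * q ^ 2 + 2 ≤ ((ℓ : ℝ) - 1) * q * s)
    (h2 : 16 * max 1 ((n : ℝ) - ℓ) * Real.log n ≤ ((ℓ : ℝ) - 1) * q * s) :
    ENNReal.ofReal (1 - 3 / n) ≤
      P {ω | ∀ π1 : Equiv.Perm (Fin n),
          (univ.filter fun i => π1 i ≠ π i).card ≤ n - ℓ →
          (∀ i i' k' : Fin n, k' ≠ π i' →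
              wSim (A ω) (B ω) π1 i' k' < wSim (A ω) (B ω) π1 i (π i)) ∧
          ∀ T : Finset (Fin n × Fin n), T.card = n →
            (∀ p ∈ T, ∀ p' ∉ T, wSim (A ω) (B ω) π1 p'.1 p'.2 ≤ wSim (A ω) (B ω) π1 p.1 p.2) →
            T = Finset.univ.image fun i => (i, π i)} :=
  seeded_matching_last_stage_general n q s ℓ Ω P A B π hmodel hℓn h1 h2

end GraphMatching
end
end

section
/- Let D(x‖q) = x·log(x/q) + (1−x)·log((1−x)/(1−q)) denote the Kullback–Leibler divergence between Bern(x) and Bern(q). Then: (i) for all 0 < q ≤ x ≤ 1, D(x‖q) ≥ (x−q)²/(2x(1−q)); and (ii) for all 0 < q ≤ x ≤ 1/2, D(x‖q) ≤ (x−q)²/(2q(1−q)). -/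
/-!
For fixed `x`, the map `t ↦ D(x‖t)` vanishes at `t = x` and has derivative
`(t - x) / (t (1 - t))`. Hence `D(x‖q) = ∫_q^x (x - t) / (t (1 - t)) dt`, and bounding the
variance `t (1 - t)` on `[q, x]` above by `x (1 - q)`, or below by `q (1 - q)` when `x ≤ 1/2`,
compares this integral with `∫_q^x (x - t) / c dt = (x - q)² / (2c)`. The comparison is carried
out by the monotonicity of `t ↦ D(x‖t) - (x - t)² / (2c)`.
-/

noncomputable def bernKL (x q : ℝ) : ℝ :=
  x * Real.log (x / q) + (1 - x) * Real.log ((1 - x) / (1 - q))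

open Real Set

lemma mul_log_div_eq_sub (x : ℝ) {t : ℝ} (ht : t ≠ 0) :
    x * log (x / t) = x * log x - x * log t := by
  rcases eq_or_ne x 0 with rfl | hx
  · simp
  · rw [log_div hx ht, mul_sub]

lemma bernKL_self (x : ℝ) : bernKL x x = 0 := by
  simp [bernKL]

lemma bernKL_eq_sub (x : ℝ) {t : ℝ} (ht₀ : t ≠ 0) (ht₁ : t ≠ 1) :
    bernKL x t = x * log x + (1 - x) * log (1 - x) - (x * log t + (1 - x) * log (1 - t)) := by
  rw [bernKL, mul_log_div_eq_sub x ht₀, mul_log_div_eq_sub (1 - x) (sub_ne_zero.2 ht₁.symm)]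
  ring

lemma hasDerivAt_bernKL (x : ℝ) {t : ℝ} (ht₀ : 0 < t) (ht₁ : t < 1) :
    HasDerivAt (bernKL x) ((t - x) / (t * (1 - t))) t := by
  have hcross : HasDerivAt (fun s => x * log s + (1 - x) * log (1 - s))
      (x * t⁻¹ + (1 - x) * (-1 / (1 - t))) t :=
    ((hasDerivAt_log ht₀.ne').const_mul x).add
      ((((hasDerivAt_id t).const_sub 1).log (sub_ne_zero.2 ht₁.ne')).const_mul (1 - x))
  have hKL := (hcross.const_sub (x * log x + (1 - x) * log (1 - x))).congr_of_eventuallyEq <|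
    Filter.eventually_of_mem (Ioo_mem_nhds ht₀ ht₁) fun s hs => bernKL_eq_sub x hs.1.ne' hs.2.ne
  refine hKL.congr_deriv ?_
  have : 1 - t ≠ 0 := sub_ne_zero.2 ht₁.ne'
  field_simp
  ring

lemma continuousOn_bernKL {q x : ℝ} (hq : 0 < q) (hx : x ≤ 1) :
    ContinuousOn (bernKL x) (Icc q x) := by
  have hx_div : ContinuousOn (fun t => x * log (x / t)) (Icc q x) :=
    continuousOn_const.mul <| (continuousOn_const.div continuousOn_id fun t ht =>
      (hq.trans_le ht.1).ne').log fun t ht =>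
        (div_pos (hq.trans_le (ht.1.trans ht.2)) (hq.trans_le ht.1)).ne'
  rcases hx.lt_or_eq with hx | rfl
  · refine hx_div.add <| continuousOn_const.mul <|
      (continuousOn_const.div (by fun_prop) fun t ht => ?_).log fun t ht => ?_
    · linarith [ht.2]
    · exact (div_pos (by linarith) (by linarith [ht.2])).ne'
  · exact hx_div.congr fun t _ => by simp [bernKL]

lemma hasDerivAt_bernKL_sub_sq_div (x c : ℝ) {t : ℝ} (ht₀ : 0 < t) (ht₁ : t < 1) :
    HasDerivAt (fun s => bernKL x s - (x - s) ^ 2 / (2 * c))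
      ((x - t) / c - (x - t) / (t * (1 - t))) t := by
  refine ((hasDerivAt_bernKL x ht₀ ht₁).sub
    ((((hasDerivAt_id t).const_sub x).fun_pow 2).div_const (2 * c))).congr_deriv ?_
  simp only [id]
  ring

lemma sq_div_le_bernKL {q x c : ℝ} (hq : 0 < q) (hqx : q ≤ x) (hx : x ≤ 1)
    (hvar : ∀ t ∈ Ioo q x, t * (1 - t) ≤ c) :
    (x - q) ^ 2 / (2 * c) ≤ bernKL x q := by
  have hanti : AntitoneOn (fun s => bernKL x s - (x - s) ^ 2 / (2 * c)) (Icc q x) := by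
    refine antitoneOn_of_hasDerivWithinAt_nonpos
      (f' := fun t => (x - t) / c - (x - t) / (t * (1 - t))) (convex_Icc q x)
      ((continuousOn_bernKL hq hx).sub (by fun_prop)) (fun t ht => ?_) (fun t ht => ?_)
    all_goals rw [interior_Icc] at ht
    · exact (hasDerivAt_bernKL_sub_sq_div x c (hq.trans ht.1) (ht.2.trans_le hx)).hasDerivWithinAt
    · have hvar_pos : 0 < t * (1 - t) := mul_pos (hq.trans ht.1) (by linarith [ht.2])
      exact sub_nonpos.2 <| div_le_div_of_nonneg_left (by linarith [ht.2]) hvar_pos (hvar t ht)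
  simpa [bernKL_self, sub_nonneg] using hanti (left_mem_Icc.2 hqx) (right_mem_Icc.2 hqx) hqx

lemma bernKL_le_sq_div {q x c : ℝ} (hq : 0 < q) (hqx : q ≤ x) (hx : x ≤ 1) (hc : 0 < c)
    (hvar : ∀ t ∈ Ioo q x, c ≤ t * (1 - t)) :
    bernKL x q ≤ (x - q) ^ 2 / (2 * c) := by
  have hmono : MonotoneOn (fun s => bernKL x s - (x - s) ^ 2 / (2 * c)) (Icc q x) := by
    refine monotoneOn_of_hasDerivWithinAt_nonneg
      (f' := fun t => (x - t) / c - (x - t) / (t * (1 - t))) (convex_Icc q x)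
      ((continuousOn_bernKL hq hx).sub (by fun_prop)) (fun t ht => ?_) (fun t ht => ?_)
    all_goals rw [interior_Icc] at ht
    · exact (hasDerivAt_bernKL_sub_sq_div x c (hq.trans ht.1) (ht.2.trans_le hx)).hasDerivWithinAt
    · exact sub_nonneg.2 <| div_le_div_of_nonneg_left (by linarith [ht.2]) hc (hvar t ht)
  simpa [bernKL_self, sub_nonpos] using hmono (left_mem_Icc.2 hqx) (right_mem_Icc.2 hqx) hqx

theorem kl_divergence_quadratic_bounds :
    (∀ q x : ℝ, 0 < q → q ≤ x → x ≤ 1 →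
      (x - q) ^ 2 / (2 * x * (1 - q)) ≤ bernKL x q) ∧
    (∀ q x : ℝ, 0 < q → q ≤ x → x ≤ 1 / 2 →
      bernKL x q ≤ (x - q) ^ 2 / (2 * q * (1 - q))) := by
  refine ⟨fun q x hq hqx hx => ?_, fun q x hq hqx hx => ?_⟩
  · rw [mul_assoc]
    exact sq_div_le_bernKL hq hqx hx fun t ht =>
      mul_le_mul ht.2.le (by linarith [ht.1]) (by linarith [ht.2]) (by linarith)
  · rw [mul_assoc]
    refine bernKL_le_sq_div hq hqx (by linarith) (mul_pos hq (by linarith)) fun t ht => ?_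
    nlinarith [ht.1, ht.2]
end
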